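/- arXiv:2409.04108 — 12 statements merged into one kernel-verified Lean document; each statement's English description precedes it below -/
import Mathlib

section
/- For a probability distribution π on a finite set X and α ∈ (0,1) ∪ (1,∞), the minimum over all probability distributions π̂ on X of the expected α-loss Σ_x π_x · (α/(α-1))·(1 - π̂_x^{(α-1)/α}) equals (α/(α-1))·(1 - exp(((1-α)/α)·H_α(π))), where H_α(π) = (1/(1-α))·log Σ_x π_x^α is the Rényi entropy, and the minimum is achieved by π̂_x* = π_x^α / Σ_{x'} π_{x'}^α. -/
/-!
Put `β = (α - 1) / α`, `T = ∑ π x ^ α` and let `q x = π x ^ α / T` be the escort distribution,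
so that `π x = T ^ (1/α) * q x ^ (1 - β)` and the expected loss of `p` is
`β⁻¹ * (1 - T ^ (1/α) * ∑ q x ^ (1 - β) * p x ^ β)`. Weighted AM-GM, which reverses for `β < 0`,
gives `β * ∑ q ^ (1 - β) * p ^ β ≤ β * ∑ ((1 - β) * q + β * p) = β`, with equality at `p = q`.
Hence the minimum is `β⁻¹ * (1 - T ^ (1/α))`, and `T ^ (1/α) = exp ((1 - α)/α * H_α(π))`.
-/

open Finset

namespace Real

lemma one_add_mul_sub_one_le_rpow_of_nonpos {t β : ℝ} (ht : 0 < t) (hβ : β ≤ 0) :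
    1 + β * (t - 1) ≤ t ^ β :=
  calc 1 + β * (t - 1) ≤ β * log t + 1 := by
        nlinarith [log_le_sub_one_of_pos ht]
    _ ≤ exp (β * log t) := add_one_le_exp _
    _ = t ^ β := by rw [rpow_def_of_pos ht, mul_comm]

/-- Bernoulli's inequality `t ^ β ≤ 1 + β (t - 1)` for `0 ≤ β ≤ 1` reverses for `β ≤ 0`;
multiplying by `β` unifies both cases. -/
lemma mul_rpow_le_mul_one_add_mul_sub_one {t β : ℝ} (ht : 0 < t) (hβ : β ≤ 1) :
    β * t ^ β ≤ β * (1 + β * (t - 1)) := by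
  rcases le_or_gt β 0 with hβ0 | hβ0
  · exact mul_le_mul_of_nonpos_left (one_add_mul_sub_one_le_rpow_of_nonpos ht hβ0) hβ0
  · have h := rpow_one_add_le_one_add_mul_self (s := t - 1) (by linarith) hβ0.le hβ
    rw [add_sub_cancel] at h
    exact mul_le_mul_of_nonneg_left h hβ0.le

lemma mul_rpow_one_sub_mul_rpow_le {a b β : ℝ} (ha : 0 < a) (hb : 0 < b) (hβ : β ≤ 1) :
    β * (a ^ (1 - β) * b ^ β) ≤ β * ((1 - β) * a + β * b) := by
  have hab : a ^ (1 - β) * b ^ β = a * (b / a) ^ β := by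
    rw [rpow_sub ha, rpow_one, div_rpow hb.le ha.le]
    field_simp
  have key := mul_le_mul_of_nonneg_left (mul_rpow_le_mul_one_add_mul_sub_one (div_pos hb ha) hβ)
    ha.le
  rw [hab]
  calc β * (a * (b / a) ^ β) = a * (β * (b / a) ^ β) := by ring
    _ ≤ a * (β * (1 + β * (b / a - 1))) := key
    _ = β * ((1 - β) * a + β * b) := by field_simp; ring

end Real

/-- The nonnegativity of the Rényi divergence of order `1 - β` of `q` from `p`, without the
logarithm. -/
lemma inv_mul_one_sub_sum_rpow_mul_rpow_nonneg {ι : Type*} (s : Finset ι) {q p : ι → ℝ}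
    (hq : ∀ i ∈ s, 0 < q i) (hp : ∀ i ∈ s, 0 < p i) (hq1 : ∑ i ∈ s, q i = 1)
    (hp1 : ∑ i ∈ s, p i = 1) {β : ℝ} (hβ : β ≤ 1) :
    0 ≤ β⁻¹ * (1 - ∑ i ∈ s, q i ^ (1 - β) * p i ^ β) := by
  have hsum : β * ∑ i ∈ s, q i ^ (1 - β) * p i ^ β ≤ β :=
    calc β * ∑ i ∈ s, q i ^ (1 - β) * p i ^ β
        ≤ ∑ i ∈ s, β * ((1 - β) * q i + β * p i) := by
          rw [mul_sum]
          exact sum_le_sum fun i hi => Real.mul_rpow_one_sub_mul_rpow_le (hq i hi) (hp i hi) hβ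
      _ = β := by
          rw [← mul_sum, sum_add_distrib, ← mul_sum, ← mul_sum, hq1, hp1]
          ring
  have hsq : β⁻¹ * (1 - ∑ i ∈ s, q i ^ (1 - β) * p i ^ β) =
      β⁻¹ ^ 2 * (β - β * ∑ i ∈ s, q i ^ (1 - β) * p i ^ β) := by
    rcases eq_or_ne β 0 with rfl | hβ0
    · simp
    · field_simp
  rw [hsq]
  exact mul_nonneg (sq_nonneg _) (sub_nonneg.mpr hsum)

section Renyi

variable {ι : Type*} [Fintype ι]

noncomputable def renyiEntropy (α : ℝ) (π : ι → ℝ) : ℝ :=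
  1 / (1 - α) * Real.log (∑ x, π x ^ α)

lemma exp_mul_renyiEntropy {α : ℝ} {π : ι → ℝ} (hα : α ≠ 0) (hα1 : α ≠ 1)
    (hT : 0 < ∑ x, π x ^ α) :
    Real.exp ((1 - α) / α * renyiEntropy α π) = (∑ x, π x ^ α) ^ (1 / α) := by
  rw [renyiEntropy, Real.rpow_def_of_pos hT]
  congr 1
  field_simp [sub_ne_zero.mpr hα1.symm]

noncomputable def escort (α : ℝ) (π : ι → ℝ) (x : ι) : ℝ :=
  π x ^ α / ∑ y, π y ^ α

lemma escort_pos {α : ℝ} {π : ι → ℝ} (hπ : ∀ x, 0 < π x) (x : ι) : 0 < escort α π x := by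
  have : Nonempty ι := ⟨x⟩
  exact div_pos (Real.rpow_pos_of_pos (hπ x) α)
    (sum_pos (fun y _ => Real.rpow_pos_of_pos (hπ y) α) univ_nonempty)

lemma sum_escort {α : ℝ} {π : ι → ℝ} (hT : ∑ x, π x ^ α ≠ 0) : ∑ x, escort α π x = 1 := by
  simp only [escort, ← sum_div, div_self hT]

lemma rpow_mul_escort_rpow {α : ℝ} {π : ι → ℝ} (hα : α ≠ 0) (hT : 0 < ∑ x, π x ^ α) {x : ι}
    (hπ : 0 ≤ π x) : (∑ y, π y ^ α) ^ (1 / α) * escort α π x ^ (1 / α) = π x := by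
  rw [escort, Real.div_rpow (Real.rpow_nonneg hπ α) hT.le, ← Real.rpow_mul hπ,
    mul_one_div_cancel hα, Real.rpow_one, mul_div_cancel₀ _ (Real.rpow_pos_of_pos hT _).ne']

end Renyi

lemma sum_mul_const_mul_one_sub {ι : Type*} [Fintype ι] {π : ι → ℝ} (hπ : ∑ x, π x = 1)
    (c : ℝ) (f : ι → ℝ) : ∑ x, π x * (c * (1 - f x)) = c * (1 - ∑ x, π x * f x) := by
  calc ∑ x, π x * (c * (1 - f x)) = c * (∑ x, π x - ∑ x, π x * f x) := by
        rw [← sum_sub_distrib, mul_sum]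
        exact sum_congr rfl fun x _ => by ring
    _ = c * (1 - ∑ x, π x * f x) := by rw [hπ]

/-- For a full-support probability distribution `π` on a finite set `X` and
`α ∈ (0,1) ∪ (1,∞)`, the minimum over (full-support) probability distributions `p` on `X`
of the expected α-loss `∑ x, π x • (α/(α-1))•(1 - p x ^ ((α-1)/α))` equals
`(α/(α-1))·(1 - exp(((1-α)/α)·H_α(π)))`, and it is attained at `p* x = π x ^ α / ∑ x', π x' ^ α`. -/
theorem stmt_0 {X : Type*} [Fintype X] [Nonempty X]
    (π : X → ℝ) (hπ : ∀ x, 0 < π x) (hsum : ∑ x, π x = 1)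
    (α : ℝ) (hα : 0 < α) (hα1 : α ≠ 1) :
    IsLeast
      {v : ℝ | ∃ p : X → ℝ, (∀ x, 0 < p x) ∧ ∑ x, p x = 1 ∧
        v = ∑ x, π x * (α / (α - 1) * (1 - p x ^ ((α - 1) / α)))}
      (α / (α - 1) *
        (1 - Real.exp (((1 - α) / α) * ((1 / (1 - α)) * Real.log (∑ x, π x ^ α))))) ∧
    ∑ x, π x * (α / (α - 1) * (1 - (π x ^ α / ∑ x', π x' ^ α) ^ ((α - 1) / α))) =
      α / (α - 1) *
        (1 - Real.exp (((1 - α) / α) * ((1 / (1 - α)) * Real.log (∑ x, π x ^ α)))) := by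
  set T := ∑ x, π x ^ α
  set β := (α - 1) / α
  have hT : 0 < T := sum_pos (fun x _ => Real.rpow_pos_of_pos (hπ x) α) univ_nonempty
  have hβ : β ≤ 1 := div_le_one_of_le₀ (sub_le_self α zero_le_one) hα.le
  have hβα : 1 / α = 1 - β := by rw [one_sub_div hα.ne', sub_sub_cancel]
  have hloss : ∀ p : X → ℝ, ∑ x, π x * (α / (α - 1) * (1 - p x ^ β)) =
      α / (α - 1) * (1 - T ^ (1 - β) * ∑ x, escort α π x ^ (1 - β) * p x ^ β) := fun p => by
    rw [sum_mul_const_mul_one_sub hsum, mul_sum, ← hβα]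
    congr 2
    exact sum_congr rfl fun x _ => by rw [← rpow_mul_escort_rpow hα.ne' hT (hπ x).le]; ring
  have hopt : ∑ x, escort α π x ^ (1 - β) * escort α π x ^ β = 1 := by
    simp only [← Real.rpow_add (escort_pos hπ _), sub_add_cancel, Real.rpow_one,
      sum_escort hT.ne']
  have hexp : Real.exp ((1 - α) / α * (1 / (1 - α) * Real.log T)) = T ^ (1 - β) := by
    rw [← hβα]
    exact exp_mul_renyiEntropy hα.ne' hα1 hT
  rw [hexp]
  refine ⟨⟨⟨escort α π, escort_pos hπ, sum_escort hT.ne', ?_⟩, ?_⟩, ?_⟩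
  · rw [hloss, hopt, mul_one]
  · rintro v ⟨p, hp, hp1, rfl⟩
    have hgap := mul_nonneg (Real.rpow_pos_of_pos hT (1 - β)).le
      (inv_mul_one_sub_sum_rpow_mul_rpow_nonneg univ (fun x _ => escort_pos hπ x)
        (fun x _ => hp x) (sum_escort hT.ne') hp1 hβ)
    rw [hloss, ← inv_div (α - 1) α]
    linarith
  · exact (hloss (escort α π)).trans (by rw [hopt, mul_one])
end

section
/- Fix α ∈ (1,∞) and let f_α(t) = t^{(α-1)/α} with inverse f_α^{-1}(s) = s^{α/(α-1)}. For a probability distribution π on a finite set X, the supremum over probability distributions w on X of f_α^{-1}(Σ_x π_x · f_α(w_x)) equals (Σ_x π_x^α)^{1/(α-1)} = exp(-H_α(π)), and the supremum is attained at w_x* = π_x^α / Σ_{x'} π_{x'}^α. -/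
/-!
Write `β = (α - 1) / α`, so that `α` and `1 / β = α / (α - 1)` are Hölder conjugate.
Hölder's inequality with `g = w ^ β` gives `∑ π w ^ β ≤ ‖π‖_α ‖w ^ β‖_{1/β} = ‖π‖_α`,
because `∑ (w ^ β) ^ (1 / β) = ∑ w = 1`. Equality holds when `w ^ β ∝ π ^ (α - 1)`,
i.e. `w ∝ π ^ α`, and raising `‖π‖_α = (∑ π ^ α) ^ (1 / α)` to the power `α / (α - 1)`
gives `(∑ π ^ α) ^ (1 / (α - 1))`.
-/

open Finset

section

open Real

variable {ι : Type*} (s : Finset ι) {p w : ι → ℝ} {α : ℝ}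

theorem sum_mul_rpow_le_of_sum_eq_one (hα : 1 < α) (hp : ∀ i ∈ s, 0 ≤ p i)
    (hw : ∀ i ∈ s, 0 ≤ w i) (hw1 : ∑ i ∈ s, w i = 1) :
    ∑ i ∈ s, p i * w i ^ ((α - 1) / α) ≤ (∑ i ∈ s, p i ^ α) ^ (1 / α) := by
  have hβ : (α - 1) / α * conjExponent α = 1 := by
    rw [conjExponent]
    field_simp [(by linarith : α - 1 ≠ 0)]
  have hg : ∑ i ∈ s, (w i ^ ((α - 1) / α)) ^ conjExponent α = 1 := by
    refine (sum_congr rfl fun i hi => ?_).trans hw1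
    rw [← rpow_mul (hw i hi), hβ, rpow_one]
  have hHolder := inner_le_Lp_mul_Lq_of_nonneg s (HolderConjugate.conjExponent hα) hp
    (g := fun i => w i ^ ((α - 1) / α)) fun i hi => rpow_nonneg (hw i hi) _
  rwa [hg, one_rpow, mul_one] at hHolder

theorem mul_rpow_div_rpow_eq {a S : ℝ} (ha : 0 ≤ a) (hS : 0 ≤ S) (hα : α ≠ 0) :
    a * (a ^ α / S) ^ ((α - 1) / α) = a ^ α / S ^ ((α - 1) / α) := by
  rw [div_rpow (rpow_nonneg ha α) hS, ← rpow_mul ha, mul_div_cancel₀ _ hα, ← mul_div_assoc,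
    ← rpow_one_add' ha (by simpa using hα), add_sub_cancel]

theorem sum_mul_rpow_normalized_eq (hp : ∀ i ∈ s, 0 ≤ p i) (hα : α ≠ 0)
    (hS : 0 < ∑ i ∈ s, p i ^ α) :
    ∑ i ∈ s, p i * (p i ^ α / ∑ j ∈ s, p j ^ α) ^ ((α - 1) / α) =
      (∑ i ∈ s, p i ^ α) ^ (1 / α) := by
  have hexp : 1 / α = 1 - (α - 1) / α := by field_simp; ring
  rw [sum_congr rfl fun i hi => mul_rpow_div_rpow_eq (hp i hi) hS.le hα, ← sum_div, hexp,
    rpow_sub hS, rpow_one]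

theorem sum_rpow_pos_of_sum_eq_one (hp : ∀ i ∈ s, 0 ≤ p i) (hp1 : ∑ i ∈ s, p i = 1) :
    0 < ∑ i ∈ s, p i ^ α := by
  obtain ⟨i, hi, hpi⟩ := exists_ne_zero_of_sum_ne_zero (hp1 ▸ one_ne_zero)
  exact sum_pos' (fun j hj => rpow_nonneg (hp j hj) α)
    ⟨i, hi, rpow_pos_of_pos ((hp i hi).lt_of_ne' hpi) α⟩

theorem rpow_one_div_sub_one_eq_exp_neg {S : ℝ} (hS : 0 < S) (α : ℝ) :
    S ^ (1 / (α - 1)) = exp (-((1 / (1 - α)) * log S)) := by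
  rw [rpow_def_of_pos hS, ← neg_sub 1 α, one_div_neg_eq_neg_one_div]
  ring_nf

end

theorem stmt_1_general {X : Type*} [Fintype X]
    (π : X → ℝ) (hπ : ∀ x, 0 ≤ π x) (hsum : ∑ x, π x = 1)
    (α : ℝ) (hα : 1 < α) :
    IsGreatest
      {v : ℝ | ∃ w : X → ℝ, (∀ x, 0 ≤ w x) ∧ ∑ x, w x = 1 ∧
        v = (∑ x, π x * w x ^ ((α - 1) / α)) ^ (α / (α - 1))}
      ((∑ x, π x ^ α) ^ (1 / (α - 1))) ∧
    (∑ x, π x * (π x ^ α / ∑ x', π x' ^ α) ^ ((α - 1) / α)) ^ (α / (α - 1)) =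
      (∑ x, π x ^ α) ^ (1 / (α - 1)) ∧
    (∑ x, π x ^ α) ^ (1 / (α - 1)) =
      Real.exp (-((1 / (1 - α)) * Real.log (∑ x, π x ^ α))) := by
  have hα0 : α ≠ 0 := by linarith
  have hS : 0 < ∑ x, π x ^ α := sum_rpow_pos_of_sum_eq_one univ (fun x _ => hπ x) hsum
  have hpow : ((∑ x, π x ^ α) ^ (1 / α)) ^ (α / (α - 1)) = (∑ x, π x ^ α) ^ (1 / (α - 1)) := by
    rw [← Real.rpow_mul hS.le]
    field_simp
  have hattain :
      (∑ x, π x * (π x ^ α / ∑ x', π x' ^ α) ^ ((α - 1) / α)) ^ (α / (α - 1)) =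
        (∑ x, π x ^ α) ^ (1 / (α - 1)) := by
    rw [sum_mul_rpow_normalized_eq univ (fun x _ => hπ x) hα0 hS, hpow]
  refine ⟨⟨⟨fun x => π x ^ α / ∑ x', π x' ^ α, fun x => ?_, ?_, hattain.symm⟩, ?_⟩, hattain,
    rpow_one_div_sub_one_eq_exp_neg hS α⟩
  · exact div_nonneg (Real.rpow_nonneg (hπ x) α) hS.le
  · rw [← sum_div, div_self hS.ne']
  rintro v ⟨w, hw, hw1, rfl⟩
  rw [← hpow]
  exact Real.rpow_le_rpow (sum_nonneg fun x _ => mul_nonneg (hπ x) (Real.rpow_nonneg (hw x) _))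
    (sum_mul_rpow_le_of_sum_eq_one univ hα (fun x _ => hπ x) (fun x _ => hw x) hw1)
    (div_pos (by linarith) (by linarith)).le

/-- For `α > 1`, `f_α(t) = t^((α-1)/α)` with inverse `s ↦ s^(α/(α-1))`,
the supremum over probability distributions `w` on `X` of `(∑ x, π x * (w x)^((α-1)/α))^(α/(α-1))`
equals `(∑ x, π x ^ α)^(1/(α-1)) = exp(-H_α(π))`, attained at `w* x = π x ^ α / ∑ x', π x' ^ α`. -/
theorem stmt_1 {X : Type*} [Fintype X] [Nonempty X]
    (π : X → ℝ) (hπ : ∀ x, 0 ≤ π x) (hsum : ∑ x, π x = 1)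
    (α : ℝ) (hα : 1 < α) :
    IsGreatest
      {v : ℝ | ∃ w : X → ℝ, (∀ x, 0 ≤ w x) ∧ ∑ x, w x = 1 ∧
        v = (∑ x, π x * w x ^ ((α - 1) / α)) ^ (α / (α - 1))}
      ((∑ x, π x ^ α) ^ (1 / (α - 1))) ∧
    (∑ x, π x * (π x ^ α / ∑ x', π x' ^ α) ^ ((α - 1) / α)) ^ (α / (α - 1)) =
      (∑ x, π x ^ α) ^ (1 / (α - 1)) ∧
    (∑ x, π x ^ α) ^ (1 / (α - 1)) =
      Real.exp (-((1 / (1 - α)) * Real.log (∑ x, π x ^ α))) :=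
  stmt_1_general π hπ hsum α hα
end

section
/- For every α ∈ (0,1) ∪ (1,∞), the function π ↦ (Σ_{x∈X} π_x^α)^{1/(α-1)} (equivalently, ‖π‖_α^{α/(α-1)}) is convex on the probability simplex over a finite set X. -/
/-!
For `α < 1` the sum `∑ x, π x ^ α` is concave and at least `1` on the simplex, and
`t ↦ t ^ (1 / (α - 1))` is convex and antitone on `(0, ∞)`. For `α > 1` the function is
`‖π‖_α ^ (α / (α - 1))`: a norm, convex and nonnegative, composed with the convex monotone
`t ↦ t ^ (α / (α - 1))` on `[0, ∞)`.
-/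

open Set

section Composition

variable {E : Type*} [AddCommGroup E] [Module ℝ E] {s : Set E} {t : Set ℝ} {f : E → ℝ}
  {g : ℝ → ℝ}

theorem ConvexOn.comp_of_mapsTo (hg : ConvexOn ℝ t g) (hf : ConvexOn ℝ s f)
    (hg' : MonotoneOn g t) (hst : MapsTo f s t) : ConvexOn ℝ s (g ∘ f) := by
  refine ⟨hf.1, fun x hx y hy a b ha hb hab => ?_⟩
  calc g (f (a • x + b • y)) ≤ g (a • f x + b • f y) :=
        hg' (hst (hf.1 hx hy ha hb hab)) (hg.1 (hst hx) (hst hy) ha hb hab)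
          (hf.2 hx hy ha hb hab)
    _ ≤ a • g (f x) + b • g (f y) := hg.2 (hst hx) (hst hy) ha hb hab

theorem ConvexOn.comp_concaveOn_of_mapsTo (hg : ConvexOn ℝ t g) (hf : ConcaveOn ℝ s f)
    (hg' : AntitoneOn g t) (hst : MapsTo f s t) : ConvexOn ℝ s (g ∘ f) := by
  refine ⟨hf.1, fun x hx y hy a b ha hb hab => ?_⟩
  calc g (f (a • x + b • y)) ≤ g (a • f x + b • f y) :=
        hg' (hg.1 (hst hx) (hst hy) ha hb hab) (hst (hf.1 hx hy ha hb hab))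
          (hf.2 hx hy ha hb hab)
    _ ≤ a • g (f x) + b • g (f y) := hg.2 (hst hx) (hst hy) ha hb hab

end Composition

theorem convexOn_rpow_of_nonpos {p : ℝ} (hp : p ≤ 0) :
    ConvexOn ℝ (Ioi 0) fun x : ℝ ↦ x ^ p := by
  have hlog : ConvexOn ℝ (Ioi 0) fun x : ℝ ↦ p * Real.log x :=
    (strictConcaveOn_log_Ioi.concaveOn.neg.smul (neg_nonneg.2 hp)).congr fun x _ => by
      simp only [Pi.neg_apply, smul_eq_mul]; ring
  refine (convexOn_exp.comp_of_mapsTo hlog (Real.exp_monotone.monotoneOn _)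
    (mapsTo_univ _ _)).congr fun x hx => ?_
  simp only [Function.comp_apply, Real.rpow_def_of_pos (mem_Ioi.1 hx), mul_comm]

section SumRpow

variable {ι : Type*} [Fintype ι]

theorem concaveOn_sum_rpow {p : ℝ} (hp₀ : 0 ≤ p) (hp₁ : p ≤ 1) :
    ConcaveOn ℝ (Ici 0) fun π : ι → ℝ ↦ ∑ i, π i ^ p := by
  have hterm (i : ι) : ConcaveOn ℝ (Ici 0) fun π : ι → ℝ ↦ π i ^ p :=
    ((Real.concaveOn_rpow hp₀ hp₁).comp_linearMap
      (LinearMap.proj (R := ℝ) (φ := fun _ : ι ↦ ℝ) i)).subset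
      (fun π hπ => hπ i) (convex_Ici 0)
  convert Finset.sum_induction (s := Finset.univ) (fun i π ↦ π i ^ p) (ConcaveOn ℝ (Ici 0))
    (fun _ _ => .add) (concaveOn_const 0 (convex_Ici 0)) fun i _ => hterm i
  simp only [Finset.sum_apply]

theorem convexOn_sum_rpow_rpow_one_div {p : ℝ} (hp : 1 ≤ p) :
    ConvexOn ℝ (Ici 0) fun π : ι → ℝ ↦ (∑ i, π i ^ p) ^ (1 / p) := by
  have : Fact (1 ≤ ENNReal.ofReal p) := ⟨by simpa using ENNReal.ofReal_le_ofReal hp⟩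
  have hp' : (ENNReal.ofReal p).toReal = p := ENNReal.toReal_ofReal (by linarith)
  let toLp := (WithLp.linearEquiv (ENNReal.ofReal p) ℝ (ι → ℝ)).symm
  refine ((convexOn_univ_norm.comp_linearMap toLp.toLinearMap).subset (subset_univ _)
    (convex_Ici 0)).congr fun π hπ => ?_
  change ‖toLp π‖ = _
  rw [PiLp.norm_eq_sum (by rw [hp']; linarith), hp']
  congr 1
  exact Finset.sum_congr rfl fun i _ => by
    rw [show ‖toLp π i‖ = |π i| from rfl, abs_of_nonneg (hπ i)]

theorem one_le_sum_rpow_of_mem_stdSimplex {p : ℝ} (hp : p ≤ 1) {π : ι → ℝ}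
    (hπ : π ∈ stdSimplex ℝ ι) : 1 ≤ ∑ i, π i ^ p :=
  hπ.2.symm.le.trans <| Finset.sum_le_sum fun i _ =>
    Real.self_le_rpow_of_le_one (hπ.1 i) (mem_Icc_of_mem_stdSimplex hπ i).2 hp

theorem convexOn_stdSimplex_sum_rpow_rpow_of_lt_one {α : ℝ} (hα0 : 0 ≤ α) (hα1 : α < 1) :
    ConvexOn ℝ (stdSimplex ℝ ι) fun π : ι → ℝ ↦ (∑ i, π i ^ α) ^ (1 / (α - 1)) := by
  have hexp : 1 / (α - 1) ≤ 0 := div_nonpos_of_nonneg_of_nonpos zero_le_one (by linarith)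
  have hsum : ConcaveOn ℝ (stdSimplex ℝ ι) fun π : ι → ℝ ↦ ∑ i, π i ^ α :=
    (concaveOn_sum_rpow hα0 hα1.le).subset (fun π hπ => hπ.1) (convex_stdSimplex ℝ ι)
  exact (convexOn_rpow_of_nonpos hexp).comp_concaveOn_of_mapsTo hsum
    (Real.antitoneOn_rpow_Ioi_of_exponent_nonpos hexp)
    fun π hπ => zero_lt_one.trans_le (one_le_sum_rpow_of_mem_stdSimplex hα1.le hπ)

theorem convexOn_stdSimplex_sum_rpow_rpow_of_one_lt {α : ℝ} (hα : 1 < α) :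
    ConvexOn ℝ (stdSimplex ℝ ι) fun π : ι → ℝ ↦ (∑ i, π i ^ α) ^ (1 / (α - 1)) := by
  have hq : 1 ≤ α / (α - 1) := by rw [le_div_iff₀ (by linarith)]; linarith
  have hnorm := (convexOn_sum_rpow_rpow_one_div (ι := ι) hα.le).subset
    (fun π hπ => hπ.1) (convex_stdSimplex ℝ ι)
  have hsum (π : ι → ℝ) (hπ : π ∈ stdSimplex ℝ ι) : 0 ≤ ∑ i, π i ^ α :=
    Finset.sum_nonneg fun i _ => Real.rpow_nonneg (hπ.1 i) _
  refine ((convexOn_rpow hq).comp_of_mapsTo hnorm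
    (Real.monotoneOn_rpow_Ici_of_exponent_nonneg (by linarith))
    fun π hπ => Real.rpow_nonneg (hsum π hπ) _).congr fun π hπ => ?_
  simp only [Function.comp_apply, ← Real.rpow_mul (hsum π hπ)]
  congr 1
  field_simp [(by linarith : α - 1 ≠ 0)]

end SumRpow

theorem stmt_3_general {X : Type*} [Fintype X]
    (α : ℝ) (hα0 : 0 < α) (hα1 : α ≠ 1) :
    ConvexOn ℝ (stdSimplex ℝ X) (fun π : X → ℝ => (∑ x, π x ^ α) ^ (1 / (α - 1))) := by
  rcases hα1.lt_or_gt with hlt | hgt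
  · exact convexOn_stdSimplex_sum_rpow_rpow_of_lt_one hα0.le hlt
  · exact convexOn_stdSimplex_sum_rpow_rpow_of_one_lt hgt

/-- For every `α ∈ (0,1) ∪ (1,∞)`, `π ↦ (∑ x, π x ^ α)^(1/(α-1))`
(equivalently `‖π‖_α^(α/(α-1))`) is convex on the probability simplex over a finite set `X`. -/
theorem stmt_3 {X : Type*} [Fintype X] [Nonempty X]
    (α : ℝ) (hα0 : 0 < α) (hα1 : α ≠ 1) :
    ConvexOn ℝ (stdSimplex ℝ X) (fun π : X → ℝ => (∑ x, π x ^ α) ^ (1 / (α - 1))) :=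
  stmt_3_general α hα0 hα1
end

section
/- Let f: ℝ → ℝ be strictly monotone and continuous on an interval containing the range of a gain function g, with f^{-1} convex. For each guess w, the map π ↦ f^{-1}(Σ_{x∈X} π_x · f(g(w,x))) is convex in π on the probability simplex; consequently the generalized prior vulnerability V_{f,g}(π) = sup_{w∈W} f^{-1}(Σ_x π_x f(g(w,x))), as a pointwise supremum of convex functions, is convex in π. -/
open Set

theorem ConvexOn.comp_sum_mul {ι : Type*} [Fintype ι] {φ : ℝ → ℝ}
    (hφ : ConvexOn ℝ univ φ) (c : ι → ℝ) {s : Set (ι → ℝ)} (hs : Convex ℝ s) :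
    ConvexOn ℝ s fun π => φ (∑ i, π i * c i) :=
  (hφ.comp_linearMap ((dotProductBilin ℝ ℝ (A := ℝ)).flip c)).subset (subset_univ s) hs

/-- For empty `ι` the supremum is the junk value `0`. -/
theorem ConvexOn.ciSup {E ι : Type*} [AddCommGroup E] [Module ℝ E] {s : Set E}
    {F : ι → E → ℝ} (hs : Convex ℝ s) (hF : ∀ i, ConvexOn ℝ s (F i))
    (hbdd : ∀ x ∈ s, BddAbove (range fun i => F i x)) :
    ConvexOn ℝ s fun x => ⨆ i, F i x := by
  rcases isEmpty_or_nonempty ι with hι | hι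
  · simpa only [Real.iSup_of_isEmpty] using convexOn_const 0 hs
  refine ⟨hs, fun x hx y hy a b ha hb hab => ?_⟩
  refine ciSup_le fun i => ?_
  calc F i (a • x + b • y) ≤ a • F i x + b • F i y := (hF i).2 hx hy ha hb hab
    _ ≤ a • (⨆ i, F i x) + b • ⨆ i, F i y := by
      gcongr
      · exact le_ciSup (hbdd x hx) i
      · exact le_ciSup (hbdd y hy) i

theorem stmt_4_general {X W : Type*} [Fintype X]
    (f finv : ℝ → ℝ) (g : W → X → ℝ)
    (hconv : ConvexOn ℝ Set.univ finv)
    (hbdd : ∀ π ∈ stdSimplex ℝ X,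
      BddAbove (Set.range fun w : W => finv (∑ x, π x * f (g w x)))) :
    (∀ w : W, ConvexOn ℝ (stdSimplex ℝ X)
        (fun π : X → ℝ => finv (∑ x, π x * f (g w x)))) ∧
    ConvexOn ℝ (stdSimplex ℝ X)
      (fun π : X → ℝ => ⨆ w : W, finv (∑ x, π x * f (g w x))) := by
  have hconv_w : ∀ w : W, ConvexOn ℝ (stdSimplex ℝ X)
      (fun π : X → ℝ => finv (∑ x, π x * f (g w x))) := fun w =>
    hconv.comp_sum_mul (fun x => f (g w x)) (convex_stdSimplex ℝ X)
  exact ⟨hconv_w, .ciSup (convex_stdSimplex ℝ X) hconv_w hbdd⟩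

/-- If `f` is strictly monotone and continuous with convex inverse `finv`, then for
each guess `w` the map `π ↦ finv (∑ x, π x * f (g w x))` is convex on the probability simplex,
and hence the generalized prior vulnerability `V_{f,g}(π) = ⨆ w, finv (∑ x, π x * f (g w x))`
is convex on the simplex (assuming the supremum is finite for every prior). -/
theorem stmt_4 {X W : Type*} [Fintype X] [Nonempty X]
    (f finv : ℝ → ℝ) (g : W → X → ℝ)
    (hmono : StrictMono f ∨ StrictAnti f) (hcont : Continuous f)
    (hinv : Function.LeftInverse finv f)
    (hconv : ConvexOn ℝ Set.univ finv)
    (hbdd : ∀ π ∈ stdSimplex ℝ X,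
      BddAbove (Set.range fun w : W => finv (∑ x, π x * f (g w x)))) :
    (∀ w : W, ConvexOn ℝ (stdSimplex ℝ X)
        (fun π : X → ℝ => finv (∑ x, π x * f (g w x)))) ∧
    ConvexOn ℝ (stdSimplex ℝ X)
      (fun π : X → ℝ => ⨆ w : W, finv (∑ x, π x * f (g w x))) :=
  stmt_4_general f finv g hconv hbdd
end

section
/- Let V: ΔX → ℝ be a convex function on the probability simplex, and let h be either convex and strictly increasing or concave and strictly decreasing (with continuous inverse h^{-1}). Define V̂_h[π, C] = h^{-1}(Σ_y p(y)·h(V(δ^y))). Then for any channels C: X → Y and R: Y → Z, the data-processing inequality holds: V̂_h[π, C] ≥ V̂_h[π, C·R], where C·R is the composed channel. -/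
/-!
A garbling `R` writes each posterior of the cascade `C·R` as a convex combination of posteriors of
`C`, with weights `p(y) R(y,z) / q(z)`, and averaging these weights against `q` gives back `p`.
Jensen's inequality for a convex `φ` on the simplex then shows that the expected value of `φ` over
posteriors can only drop under garbling. For `h` convex increasing (resp. concave decreasing),
`h ∘ V` is convex (resp. concave), and `h⁻¹` is monotone (resp. antitone) on the range of `h`,
which is an interval containing both averages since `h` is continuous.
-/

open Finset Set

section Composition

variable {𝕜 E β : Type*} [Semiring 𝕜] [PartialOrder 𝕜] [AddCommMonoid E] [Module 𝕜 E]
  [AddCommMonoid β] [PartialOrder β] [SMul 𝕜 β] {s : Set E} {f : E → β} {g : β → β}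

theorem ConvexOn.monotone_comp (hg : ConvexOn 𝕜 univ g) (hg' : Monotone g)
    (hf : ConvexOn 𝕜 s f) : ConvexOn 𝕜 s (g ∘ f) :=
  ⟨hf.1, fun _ hx _ hy _ _ ha hb hab =>
    (hg' (hf.2 hx hy ha hb hab)).trans (hg.2 trivial trivial ha hb hab)⟩

theorem ConcaveOn.antitone_comp_convexOn (hg : ConcaveOn 𝕜 univ g) (hg' : Antitone g)
    (hf : ConvexOn 𝕜 s f) : ConcaveOn 𝕜 s (g ∘ f) :=
  ⟨hf.1, fun _ hx _ hy _ _ ha hb hab =>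
    (hg.2 trivial trivial ha hb hab).trans (hg' (hf.2 hx hy ha hb hab))⟩

end Composition

theorem ConvexOn.map_sum_le_of_mem_of_ne_zero {ι E : Type*} [AddCommGroup E] [Module ℝ E]
    {s : Set E} {φ : E → ℝ} (hφ : ConvexOn ℝ s φ) {t : Finset ι} {w : ι → ℝ} {v : ι → E}
    (hw0 : ∀ i ∈ t, 0 ≤ w i) (hw1 : ∑ i ∈ t, w i = 1) (hv : ∀ i ∈ t, w i ≠ 0 → v i ∈ s) :
    φ (∑ i ∈ t, w i • v i) ≤ ∑ i ∈ t, w i • φ (v i) := by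
  have key := hφ.map_sum_le (t := t.filter (w · ≠ 0)) (w := w) (p := v)
    (fun i hi => hw0 i (mem_filter.1 hi).1)
    (by rwa [sum_filter_ne_zero])
    (fun i hi => hv i (mem_filter.1 hi).1 (mem_filter.1 hi).2)
  rwa [sum_filter_of_ne (fun i _ hi => left_ne_zero_of_smul hi),
    sum_filter_of_ne (fun i _ hi => left_ne_zero_of_smul hi)] at key

theorem Function.LeftInverse.monotoneOn_range {α β : Type*} [LinearOrder α] [Preorder β]
    {f : α → β} {g : β → α} (hgf : Function.LeftInverse g f) (hf : StrictMono f) :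
    MonotoneOn g (range f) := by
  rintro _ ⟨a, rfl⟩ _ ⟨b, rfl⟩ hab
  rw [hgf a, hgf b]
  exact hf.le_iff_le.1 hab

theorem Function.LeftInverse.antitoneOn_range {α β : Type*} [LinearOrder α] [Preorder β]
    {f : α → β} {g : β → α} (hgf : Function.LeftInverse g f) (hf : StrictAnti f) :
    AntitoneOn g (range f) := by
  rintro _ ⟨a, rfl⟩ _ ⟨b, rfl⟩ hab
  rw [hgf a, hgf b]
  exact hf.le_iff_ge.1 hab

namespace FiniteChannel

variable {X Y Z : Type*}

noncomputable section

def outputProb [Fintype X] (π : X → ℝ) (C : X → Y → ℝ) (y : Y) : ℝ := ∑ x, π x * C x y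

-- Junk value: the zero vector when `outputProb π C y = 0`, hence in the simplex only otherwise.
def posterior [Fintype X] (π : X → ℝ) (C : X → Y → ℝ) (y : Y) (x : X) : ℝ :=
  π x * C x y / outputProb π C y

def comp [Fintype Y] (C : X → Y → ℝ) (R : Y → Z → ℝ) (x : X) (z : Z) : ℝ := ∑ y, C x y * R y z

/-- `∑ y, p(y) φ(δ^y)`, the posterior `φ`-vulnerability of `π` through `C`. -/
def expectedPosterior [Fintype X] [Fintype Y] (π : X → ℝ) (C : X → Y → ℝ)
    (φ : (X → ℝ) → ℝ) : ℝ :=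
  ∑ y, outputProb π C y * φ (posterior π C y)

end

variable {π : X → ℝ} {C : X → Y → ℝ} {R : Y → Z → ℝ}

theorem outputProb_nonneg [Fintype X] (hπ0 : ∀ x, 0 ≤ π x) (hC0 : ∀ x y, 0 ≤ C x y)
    (y : Y) : 0 ≤ outputProb π C y :=
  sum_nonneg fun x _ => mul_nonneg (hπ0 x) (hC0 x y)

theorem sum_outputProb [Fintype X] [Fintype Y] (hπ1 : ∑ x, π x = 1)
    (hC1 : ∀ x, ∑ y, C x y = 1) : ∑ y, outputProb π C y = 1 := by
  simp only [outputProb]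
  rw [sum_comm]
  simp [← mul_sum, hC1, hπ1]

theorem comp_nonneg [Fintype Y] (hC0 : ∀ x y, 0 ≤ C x y) (hR0 : ∀ y z, 0 ≤ R y z)
    (x : X) (z : Z) : 0 ≤ comp C R x z :=
  sum_nonneg fun y _ => mul_nonneg (hC0 x y) (hR0 y z)

theorem sum_comp [Fintype Y] [Fintype Z] (hC1 : ∀ x, ∑ y, C x y = 1)
    (hR1 : ∀ y, ∑ z, R y z = 1) (x : X) : ∑ z, comp C R x z = 1 := by
  simp only [comp]
  rw [sum_comm]
  simp [← mul_sum, hR1, hC1]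

theorem outputProb_comp [Fintype X] [Fintype Y] (z : Z) :
    outputProb π (comp C R) z = ∑ y, outputProb π C y * R y z := by
  simp only [outputProb, comp, mul_sum, sum_mul]
  rw [sum_comm]
  exact sum_congr rfl fun _ _ => sum_congr rfl fun _ _ => by ring

theorem outputProb_mul_posterior [Fintype X] (hπ0 : ∀ x, 0 ≤ π x) (hC0 : ∀ x y, 0 ≤ C x y)
    (y : Y) (x : X) : outputProb π C y * posterior π C y x = π x * C x y := by
  by_cases hy : outputProb π C y = 0
  · have hterm := (sum_eq_zero_iff_of_nonneg fun x _ => mul_nonneg (hπ0 x) (hC0 x y)).1 hy x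
    rw [hy, zero_mul, hterm (mem_univ x)]
  · exact mul_div_cancel₀ _ hy

theorem posterior_mem_stdSimplex [Fintype X] (hπ0 : ∀ x, 0 ≤ π x) (hC0 : ∀ x y, 0 ≤ C x y)
    {y : Y} (hy : outputProb π C y ≠ 0) : posterior π C y ∈ stdSimplex ℝ X :=
  ⟨fun x => div_nonneg (mul_nonneg (hπ0 x) (hC0 x y)) (outputProb_nonneg hπ0 hC0 y),
    by simp only [posterior, ← sum_div]; exact div_self hy⟩

theorem outputProb_comp_smul_posterior_comp [Fintype X] [Fintype Y] (hπ0 : ∀ x, 0 ≤ π x)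
    (hC0 : ∀ x y, 0 ≤ C x y) (hR0 : ∀ y z, 0 ≤ R y z) (z : Z) :
    outputProb π (comp C R) z • posterior π (comp C R) z =
      ∑ y, (outputProb π C y * R y z) • posterior π C y := by
  funext x
  simp only [Pi.smul_apply, smul_eq_mul, Finset.sum_apply,
    outputProb_mul_posterior hπ0 (comp_nonneg hC0 hR0), comp, mul_sum]
  refine sum_congr rfl fun y _ => ?_
  rw [← mul_assoc, mul_right_comm (outputProb π C y), outputProb_mul_posterior hπ0 hC0]

theorem outputProb_comp_mul_le [Fintype X] [Fintype Y] (hπ0 : ∀ x, 0 ≤ π x)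
    (hC0 : ∀ x y, 0 ≤ C x y) (hR0 : ∀ y z, 0 ≤ R y z) {φ : (X → ℝ) → ℝ}
    (hφ : ConvexOn ℝ (stdSimplex ℝ X) φ) (z : Z) :
    outputProb π (comp C R) z * φ (posterior π (comp C R) z) ≤
      ∑ y, outputProb π C y * R y z * φ (posterior π C y) := by
  set q := outputProb π (comp C R) z
  have hw0 : ∀ y, 0 ≤ outputProb π C y * R y z :=
    fun y => mul_nonneg (outputProb_nonneg hπ0 hC0 y) (hR0 y z)
  by_cases hq : q = 0
  · have hw : ∀ y, outputProb π C y * R y z = 0 := fun y =>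
      (sum_eq_zero_iff_of_nonneg fun y _ => hw0 y).1 ((outputProb_comp z).symm.trans hq) y
        (mem_univ y)
    simp [hq, hw]
  have hposterior : posterior π (comp C R) z =
      ∑ y, (outputProb π C y * R y z / q) • posterior π C y := by
    rw [← inv_smul_smul₀ hq (posterior π (comp C R) z),
      outputProb_comp_smul_posterior_comp hπ0 hC0 hR0, smul_sum]
    simp only [smul_smul, div_eq_inv_mul]
  have jensen := hφ.map_sum_le_of_mem_of_ne_zero (t := univ) (v := posterior π C)
    (fun y _ => div_nonneg (hw0 y) (outputProb_nonneg hπ0 (comp_nonneg hC0 hR0) z))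
    (by rw [← sum_div, ← outputProb_comp, div_self hq])
    fun y _ hy => posterior_mem_stdSimplex hπ0 hC0 (left_ne_zero_of_mul (div_ne_zero_iff.1 hy).1)
  rw [← hposterior] at jensen
  calc q * φ (posterior π (comp C R) z)
      ≤ q * ∑ y, (outputProb π C y * R y z / q) • φ (posterior π C y) :=
        mul_le_mul_of_nonneg_left jensen (outputProb_nonneg hπ0 (comp_nonneg hC0 hR0) z)
    _ = ∑ y, outputProb π C y * R y z * φ (posterior π C y) := by
        simp only [mul_sum, smul_eq_mul]
        exact sum_congr rfl fun y _ => by field_simp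

theorem expectedPosterior_comp_le [Fintype X] [Fintype Y] [Fintype Z] (hπ0 : ∀ x, 0 ≤ π x)
    (hC0 : ∀ x y, 0 ≤ C x y) (hR0 : ∀ y z, 0 ≤ R y z) (hR1 : ∀ y, ∑ z, R y z = 1) {φ : (X → ℝ) → ℝ}
    (hφ : ConvexOn ℝ (stdSimplex ℝ X) φ) :
    expectedPosterior π (comp C R) φ ≤ expectedPosterior π C φ :=
  calc expectedPosterior π (comp C R) φ
      ≤ ∑ z, ∑ y, outputProb π C y * R y z * φ (posterior π C y) :=
        sum_le_sum fun z _ => outputProb_comp_mul_le hπ0 hC0 hR0 hφ z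
    _ = expectedPosterior π C φ := by
        rw [sum_comm]
        refine sum_congr rfl fun y _ => ?_
        rw [← sum_mul, ← mul_sum, hR1, mul_one]

theorem expectedPosterior_le_comp [Fintype X] [Fintype Y] [Fintype Z] (hπ0 : ∀ x, 0 ≤ π x)
    (hC0 : ∀ x y, 0 ≤ C x y) (hR0 : ∀ y z, 0 ≤ R y z) (hR1 : ∀ y, ∑ z, R y z = 1) {φ : (X → ℝ) → ℝ}
    (hφ : ConcaveOn ℝ (stdSimplex ℝ X) φ) :
    expectedPosterior π C φ ≤ expectedPosterior π (comp C R) φ := by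
  have := expectedPosterior_comp_le hπ0 hC0 hR0 hR1 (neg_convexOn_iff.2 hφ)
  simpa [expectedPosterior] using this

theorem expectedPosterior_mem [Fintype X] [Fintype Y] {s : Set ℝ} (hs : Convex ℝ s)
    {φ : (X → ℝ) → ℝ} (hφ : ∀ δ, φ δ ∈ s) (hπ0 : ∀ x, 0 ≤ π x) (hπ1 : ∑ x, π x = 1)
    (hC0 : ∀ x y, 0 ≤ C x y) (hC1 : ∀ x, ∑ y, C x y = 1) : expectedPosterior π C φ ∈ s :=
  hs.sum_mem (fun y _ => outputProb_nonneg hπ0 hC0 y) (sum_outputProb hπ1 hC1)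
    fun _ _ => hφ _

end FiniteChannel

open FiniteChannel in
/-- Data-processing inequality for the Kolmogorov–Nagumo posterior vulnerability:
if `V` is convex on the simplex and `h` is either convex and strictly increasing or concave and
strictly decreasing (continuous, with inverse `hinv`), then for channels `C : X → Y` and
`R : Y → Z`, `V̂_h[π, C·R] ≤ V̂_h[π, C]`. -/
theorem stmt_7 {X Y Z : Type*} [Fintype X] [Fintype Y] [Fintype Z]
    (π : X → ℝ) (hπ0 : ∀ x, 0 ≤ π x) (hπ1 : ∑ x, π x = 1)
    (C : X → Y → ℝ) (hC0 : ∀ x y, 0 ≤ C x y) (hC1 : ∀ x, ∑ y, C x y = 1)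
    (R : Y → Z → ℝ) (hR0 : ∀ y z, 0 ≤ R y z) (hR1 : ∀ y, ∑ z, R y z = 1)
    (V : (X → ℝ) → ℝ) (hV : ConvexOn ℝ (stdSimplex ℝ X) V)
    (h hinv : ℝ → ℝ) (hcont : Continuous h)
    (hli : Function.LeftInverse hinv h)
    (hcase : (ConvexOn ℝ Set.univ h ∧ StrictMono h) ∨
      (ConcaveOn ℝ Set.univ h ∧ StrictAnti h)) :
    hinv (∑ z, (∑ x, π x * ∑ y, C x y * R y z) *
        h (V fun x => π x * (∑ y, C x y * R y z) /
            ∑ x', π x' * ∑ y, C x' y * R y z)) ≤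
      hinv (∑ y, (∑ x, π x * C x y) *
        h (V fun x => π x * C x y / ∑ x', π x' * C x' y)) := by
  show hinv (expectedPosterior π (comp C R) (h ∘ V)) ≤ hinv (expectedPosterior π C (h ∘ V))
  have hrange : Convex ℝ (range h) := (isPreconnected_range hcont).ordConnected.convex
  have hA := expectedPosterior_mem hrange (fun δ => mem_range_self (V δ)) hπ0 hπ1
    (comp_nonneg hC0 hR0) (sum_comp hC1 hR1)
  have hB := expectedPosterior_mem hrange (fun δ => mem_range_self (V δ)) hπ0 hπ1 hC0 hC1
  rcases hcase with ⟨hconv, hmono⟩ | ⟨hconc, hanti⟩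
  · exact hli.monotoneOn_range hmono hA hB
      (expectedPosterior_comp_le hπ0 hC0 hR0 hR1 (hconv.monotone_comp hmono.monotone hV))
  · exact hli.antitoneOn_range hanti hB hA
      (expectedPosterior_le_comp hπ0 hC0 hR0 hR1 (hconc.antitone_comp_convexOn hanti.antitone hV))
end

section
/- Let V: ΔX → ℝ be quasi-convex on the probability simplex (V of any convex combination is at most the max of the values). Define the max-case posterior vulnerability V̂^max[π, C] = max_{y: p(y)>0} V(δ^y). Then for any channels C: X → Y and R: Y → Z, V̂^max[π, C] ≥ V̂^max[π, C·R]. -/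
/-!
The posterior `δ^z` of the cascade `C R` is a convex combination of the posteriors `δ^y` of `C`
with positive marginal, the weight of `y` being `p(y) R(y, z) / q(z)` (by the Markov chain
`X − Y − Z`). The sublevel set `{V ≤ max_y V(δ^y)}` is convex by quasi-convexity and contains every
such `δ^y`, hence also `δ^z`.
-/

open Matrix

theorem QuasiconvexOn.le_of_mem_convexHull {𝕜 E β : Type*} [Semiring 𝕜] [PartialOrder 𝕜]
    [AddCommMonoid E] [Module 𝕜 E] [Preorder β] {s t : Set E} {f : E → β} {r : β}
    {x : E} (hf : QuasiconvexOn 𝕜 s f) (hts : t ⊆ s) (hle : ∀ y ∈ t, f y ≤ r)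
    (hx : x ∈ convexHull 𝕜 t) : f x ≤ r :=
  (convexHull_min (t := {y | y ∈ s ∧ f y ≤ r}) (fun y hy => ⟨hts hy, hle y hy⟩)
    (hf r) hx).2

section Posterior

variable {X Y Z : Type*} [Fintype X]

noncomputable def posterior (π : X → ℝ) (C : Matrix X Y ℝ) (y : Y) : X → ℝ :=
  fun x => π x * C x y / (π ᵥ* C) y

variable {π : X → ℝ} {C : Matrix X Y ℝ}

theorem posterior_mem_stdSimplex (hπ : ∀ x, 0 ≤ π x) (hC : ∀ x y, 0 ≤ C x y) {y : Y}
    (hy : 0 < (π ᵥ* C) y) : posterior π C y ∈ stdSimplex ℝ X :=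
  ⟨fun x => div_nonneg (mul_nonneg (hπ x) (hC x y)) hy.le, by
    simp only [posterior, ← Finset.sum_div]
    exact div_self hy.ne'⟩

theorem vecMul_nonneg (hπ : ∀ x, 0 ≤ π x) (hC : ∀ x y, 0 ≤ C x y) (y : Y) :
    0 ≤ (π ᵥ* C) y :=
  Finset.sum_nonneg fun x _ => mul_nonneg (hπ x) (hC x y)

theorem vecMul_mul_posterior (hπ : ∀ x, 0 ≤ π x) (hC : ∀ x y, 0 ≤ C x y) (x : X) (y : Y) :
    (π ᵥ* C) y * posterior π C y x = π x * C x y := by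
  by_cases hy : (π ᵥ* C) y = 0
  · have hzero := (Finset.sum_eq_zero_iff_of_nonneg fun x _ => mul_nonneg (hπ x) (hC x y)).mp hy
    rw [hy, zero_mul, hzero x (Finset.mem_univ x)]
  · exact mul_div_cancel₀ _ hy

theorem posterior_mul_mem_convexHull [Fintype Y] (hπ : ∀ x, 0 ≤ π x) (hC : ∀ x y, 0 ≤ C x y)
    {R : Matrix Y Z ℝ} (hR : ∀ y z, 0 ≤ R y z) {z : Z} (hz : 0 < (π ᵥ* (C * R)) z) :
    posterior π (C * R) z ∈ convexHull ℝ (posterior π C '' {y | 0 < (π ᵥ* C) y}) := by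
  classical
  set S := Finset.univ.filter fun y => 0 < (π ᵥ* C) y
  have hS : ∀ {f : Y → ℝ}, (∀ y, (π ᵥ* C) y = 0 → f y = 0) → ∑ y ∈ S, f y = ∑ y, f y :=
    fun hf => Finset.sum_filter_of_ne fun y _ hfy =>
      (vecMul_nonneg hπ hC y).lt_of_ne' fun hy => hfy (hf y hy)
  have hw : ∑ y ∈ S, (π ᵥ* C) y * R y z / (π ᵥ* (C * R)) z = 1 := by
    rw [hS fun y hy => by simp [hy], ← Finset.sum_div]
    change (π ᵥ* C ᵥ* R) z / _ = 1
    rw [vecMul_vecMul, div_self hz.ne']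
  have hcomb : posterior π (C * R) z =
      ∑ y ∈ S, ((π ᵥ* C) y * R y z / (π ᵥ* (C * R)) z) • posterior π C y := by
    funext x
    simp only [Finset.sum_apply, Pi.smul_apply, smul_eq_mul]
    rw [hS fun y hy => by simp [hy]]
    calc posterior π (C * R) z x = ∑ y, π x * C x y * R y z / (π ᵥ* (C * R)) z := by
          simp only [posterior, mul_apply, Finset.mul_sum, Finset.sum_div, mul_assoc]
      _ = _ := by
          refine Finset.sum_congr rfl fun y _ => ?_
          rw [← vecMul_mul_posterior hπ hC x y]
          ring
  rw [hcomb]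
  exact (convex_convexHull ℝ _).sum_mem
    (fun y _ => div_nonneg (mul_nonneg (vecMul_nonneg hπ hC y) (hR y z)) hz.le) hw
    (fun y hy => subset_convexHull ℝ _ ⟨y, (Finset.mem_filter.mp hy).2, rfl⟩)

end Posterior

open Classical in
theorem stmt_8_general {X Y Z : Type*} [Fintype X] [Fintype Y] [Fintype Z]
    (π : X → ℝ) (hπ0 : ∀ x, 0 ≤ π x)
    (C : X → Y → ℝ) (hC0 : ∀ x y, 0 ≤ C x y)
    (R : Y → Z → ℝ) (hR0 : ∀ y z, 0 ≤ R y z)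
    (V : (X → ℝ) → ℝ) (hV : QuasiconvexOn ℝ (stdSimplex ℝ X) V)
    (hY : (Finset.univ.filter fun y : Y => 0 < ∑ x, π x * C x y).Nonempty)
    (hZ : (Finset.univ.filter fun z : Z =>
      0 < ∑ x, π x * ∑ y, C x y * R y z).Nonempty) :
    (Finset.univ.filter fun z : Z => 0 < ∑ x, π x * ∑ y, C x y * R y z).sup' hZ
        (fun z => V fun x => π x * (∑ y, C x y * R y z) /
          ∑ x', π x' * ∑ y, C x' y * R y z) ≤
      (Finset.univ.filter fun y : Y => 0 < ∑ x, π x * C x y).sup' hY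
        (fun y => V fun x => π x * C x y / ∑ x', π x' * C x' y) := by
  refine Finset.sup'_le _ _ fun z hz => ?_
  refine hV.le_of_mem_convexHull ?_ ?_
    (posterior_mul_mem_convexHull (C := C) (R := R) hπ0 hC0 hR0 (Finset.mem_filter.mp hz).2)
  · rintro _ ⟨y, hy, rfl⟩
    exact posterior_mem_stdSimplex hπ0 hC0 hy
  · rintro _ ⟨y, hy, rfl⟩
    exact Finset.le_sup' (fun y => V (posterior π C y))
      (Finset.mem_filter.mpr ⟨Finset.mem_univ y, hy⟩)

open Classical in
/-- If `V` is quasi-convex on the simplex, then the max-case posterior vulnerability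
satisfies the data-processing inequality: for channels `C : X → Y` and `R : Y → Z`,
`max_{z : q z > 0} V(δ^z) ≤ max_{y : p y > 0} V(δ^y)`. -/
theorem stmt_8 {X Y Z : Type*} [Fintype X] [Fintype Y] [Fintype Z]
    (π : X → ℝ) (hπ0 : ∀ x, 0 ≤ π x) (hπ1 : ∑ x, π x = 1)
    (C : X → Y → ℝ) (hC0 : ∀ x y, 0 ≤ C x y) (hC1 : ∀ x, ∑ y, C x y = 1)
    (R : Y → Z → ℝ) (hR0 : ∀ y z, 0 ≤ R y z) (hR1 : ∀ y, ∑ z, R y z = 1)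
    (V : (X → ℝ) → ℝ) (hV : QuasiconvexOn ℝ (stdSimplex ℝ X) V)
    (hY : (Finset.univ.filter fun y : Y => 0 < ∑ x, π x * C x y).Nonempty)
    (hZ : (Finset.univ.filter fun z : Z =>
      0 < ∑ x, π x * ∑ y, C x y * R y z).Nonempty) :
    (Finset.univ.filter fun z : Z => 0 < ∑ x, π x * ∑ y, C x y * R y z).sup' hZ
        (fun z => V fun x => π x * (∑ y, C x y * R y z) /
          ∑ x', π x' * ∑ y, C x' y * R y z) ≤
      (Finset.univ.filter fun y : Y => 0 < ∑ x, π x * C x y).sup' hY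
        (fun y => V fun x => π x * C x y / ∑ x', π x' * C x' y) :=
  stmt_8_general π hπ0 C hC0 R hR0 V hV hY hZ
end

section
/- Suppose f is strictly increasing and continuous with f^{-1} multiplicative (f^{-1}(ab) = f^{-1}(a)·f^{-1}(b) for all a, b in its domain) and all quantities below are positive. Then for any gain function g, prior π, and channel C, the generalized posterior vulnerability with h = f satisfies V̂_{f,f,g}[π,C] = f^{-1}(Σ_y sup_w Σ_x C_{x,y} π_x f(g(w,x))) ≤ f^{-1}(Σ_y max_x C_{x,y}) · V_{f,g}(π), and hence the multiplicative leakage satisfies log(V̂_{f,f,g}[π,C]/V_{f,g}(π)) ≤ log f^{-1}(Σ_y max_x C_{x,y}). -/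
/-!
Bounding each `C x y` by its column maximum `max_x C x y` factors the posterior sum as
`∑ y, ⨆ w, ∑ x, C x y * π x * f (g w x) ≤ (∑ y, max_x C x y) * ⨆ w, ∑ x, π x * f (g w x)`.
Applying the monotone, multiplicative `f⁻¹` splits the right-hand side into the two factors, and
since `f⁻¹` is continuous and monotone it commutes with the supremum, turning the second factor
into `V_{f,g}(π)`. The leakage bound is the logarithm of this inequality.
-/

open Finset

theorem iSup_sum_mul_le_iSup_mul_iSup_sum {X W : Type*} [Fintype X] {c : X → ℝ}
    {p : W → X → ℝ} (hc : ∀ x, 0 ≤ c x) (hp : ∀ w x, 0 ≤ p w x)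
    (hbdd : BddAbove (Set.range fun w => ∑ x, p w x)) :
    ⨆ w, ∑ x, c x * p w x ≤ (⨆ x, c x) * ⨆ w, ∑ x, p w x := by
  have hc_le : ∀ x, c x ≤ ⨆ x, c x := le_ciSup (Set.finite_range c).bddAbove
  have hc_sup : 0 ≤ ⨆ x, c x := Real.iSup_nonneg hc
  have hp_sup : 0 ≤ ⨆ w, ∑ x, p w x := Real.iSup_nonneg fun w => sum_nonneg fun x _ => hp w x
  refine Real.iSup_le (fun w => ?_) (mul_nonneg hc_sup hp_sup)
  calc ∑ x, c x * p w x
      ≤ ∑ x, (⨆ x, c x) * p w x :=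
        sum_le_sum fun x _ => mul_le_mul_of_nonneg_right (hc_le x) (hp w x)
    _ = (⨆ x, c x) * ∑ x, p w x := (mul_sum _ _ _).symm
    _ ≤ (⨆ x, c x) * ⨆ w, ∑ x, p w x := mul_le_mul_of_nonneg_left (le_ciSup hbdd w) hc_sup

theorem sum_iSup_sum_mul_le_sum_iSup_mul_iSup_sum {X Y W : Type*} [Fintype X] [Fintype Y]
    {C : X → Y → ℝ} {p : W → X → ℝ} (hC : ∀ x y, 0 ≤ C x y) (hp : ∀ w x, 0 ≤ p w x)
    (hbdd : BddAbove (Set.range fun w => ∑ x, p w x)) :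
    ∑ y, ⨆ w, ∑ x, C x y * p w x ≤ (∑ y, ⨆ x, C x y) * ⨆ w, ∑ x, p w x := by
  rw [sum_mul]
  exact sum_le_sum fun y _ => iSup_sum_mul_le_iSup_mul_iSup_sum (hC · y) hp hbdd

theorem stmt_10_general {X Y W : Type*} [Fintype X] [Fintype Y] [Nonempty W]
    (π : X → ℝ) (hπ0 : ∀ x, 0 ≤ π x)
    (C : X → Y → ℝ) (hC0 : ∀ x y, 0 ≤ C x y)
    (f finv : ℝ → ℝ) (g : W → X → ℝ)
    (hfinvm : Monotone finv) (hfinvc : Continuous finv)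
    (hmul : ∀ a b : ℝ, 0 ≤ a → 0 ≤ b → finv (a * b) = finv a * finv b)
    (hg0 : ∀ w x, 0 ≤ f (g w x))
    (hbdd0 : BddAbove (Set.range fun w : W => ∑ x, π x * f (g w x)))
    (hVpos : 0 < ⨆ w : W, finv (∑ x, π x * f (g w x)))
    (hVhatpos : 0 < finv (∑ y, ⨆ w : W, ∑ x, C x y * π x * f (g w x))) :
    finv (∑ y, ⨆ w : W, ∑ x, C x y * π x * f (g w x)) ≤
      finv (∑ y, ⨆ x, C x y) * (⨆ w : W, finv (∑ x, π x * f (g w x))) ∧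
    Real.log (finv (∑ y, ⨆ w : W, ∑ x, C x y * π x * f (g w x)) /
        (⨆ w : W, finv (∑ x, π x * f (g w x)))) ≤
      Real.log (finv (∑ y, ⨆ x, C x y)) := by
  have hp : ∀ w x, 0 ≤ π x * f (g w x) := fun w x => mul_nonneg (hπ0 x) (hg0 w x)
  have hposterior := sum_iSup_sum_mul_le_sum_iSup_mul_iSup_sum hC0 hp hbdd0
  simp_rw [← mul_assoc] at hposterior
  have hcapacity : 0 ≤ ∑ y, ⨆ x, C x y := sum_nonneg fun y _ => Real.iSup_nonneg (hC0 · y)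
  have hprior : 0 ≤ ⨆ w, ∑ x, π x * f (g w x) :=
    Real.iSup_nonneg fun w => sum_nonneg fun x _ => hp w x
  have bound : finv (∑ y, ⨆ w : W, ∑ x, C x y * π x * f (g w x)) ≤
      finv (∑ y, ⨆ x, C x y) * (⨆ w : W, finv (∑ x, π x * f (g w x))) :=
    calc finv (∑ y, ⨆ w : W, ∑ x, C x y * π x * f (g w x))
        ≤ finv ((∑ y, ⨆ x, C x y) * ⨆ w, ∑ x, π x * f (g w x)) := hfinvm hposterior
      _ = finv (∑ y, ⨆ x, C x y) * finv (⨆ w, ∑ x, π x * f (g w x)) :=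
        hmul _ _ hcapacity hprior
      _ = finv (∑ y, ⨆ x, C x y) * (⨆ w : W, finv (∑ x, π x * f (g w x))) := by
        rw [Monotone.map_ciSup_of_continuousAt hfinvc.continuousAt hfinvm hbdd0]
  exact ⟨bound, Real.log_le_log (div_pos hVhatpos hVpos) ((div_le_iff₀ hVpos).2 bound)⟩

/-- If `f` is strictly increasing and continuous with multiplicative inverse
`finv`, `f ∘ g` is nonnegative and all quantities are positive, then
`V̂_{f,f,g}[π,C] = finv (∑ y, ⨆ w, ∑ x, C x y * π x * f (g w x))` satisfies
`V̂_{f,f,g}[π,C] ≤ finv (∑ y, max_x C x y) * V_{f,g}(π)`, and hence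
`log (V̂_{f,f,g}[π,C] / V_{f,g}(π)) ≤ log (finv (∑ y, max_x C x y))`. -/
theorem stmt_10 {X Y W : Type*} [Fintype X] [Fintype Y] [Nonempty X] [Nonempty W]
    (π : X → ℝ) (hπ0 : ∀ x, 0 ≤ π x) (hπ1 : ∑ x, π x = 1)
    (C : X → Y → ℝ) (hC0 : ∀ x y, 0 ≤ C x y) (hC1 : ∀ x, ∑ y, C x y = 1)
    (f finv : ℝ → ℝ) (g : W → X → ℝ)
    (hf : StrictMono f) (hfc : Continuous f)
    (hli : Function.LeftInverse finv f)
    (hfinvm : Monotone finv) (hfinvc : Continuous finv)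
    (hmul : ∀ a b : ℝ, 0 ≤ a → 0 ≤ b → finv (a * b) = finv a * finv b)
    (hg0 : ∀ w x, 0 ≤ f (g w x))
    (hbdd0 : BddAbove (Set.range fun w : W => ∑ x, π x * f (g w x)))
    (hbdd1 : BddAbove (Set.range fun w : W => finv (∑ x, π x * f (g w x))))
    (hbdd2 : ∀ y : Y, BddAbove (Set.range fun w : W => ∑ x, C x y * π x * f (g w x)))
    (hVpos : 0 < ⨆ w : W, finv (∑ x, π x * f (g w x)))
    (hVhatpos : 0 < finv (∑ y, ⨆ w : W, ∑ x, C x y * π x * f (g w x))) :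
    finv (∑ y, ⨆ w : W, ∑ x, C x y * π x * f (g w x)) ≤
      finv (∑ y, ⨆ x, C x y) * (⨆ w : W, finv (∑ x, π x * f (g w x))) ∧
    Real.log (finv (∑ y, ⨆ w : W, ∑ x, C x y * π x * f (g w x)) /
        (⨆ w : W, finv (∑ x, π x * f (g w x)))) ≤
      Real.log (finv (∑ y, ⨆ x, C x y)) :=
  stmt_10_general π hπ0 C hC0 f finv g hfinvm hfinvc hmul hg0 hbdd0 hVpos hVhatpos
end

section
/- Suppose f is strictly increasing with multiplicative inverse f^{-1}. Take X = W finite, uniform prior π_x = 1/|X|, and a gain function g with f(g(w,x)) = a·1_{w=x} for some a > 0. Then the multiplicative generalized leakage equals exactly log f^{-1}(Σ_y max_x C_{x,y}); i.e., V̂_{f,f,g}[π,C] / V_{f,g}(π) = f^{-1}(Σ_y max_x C_{x,y}). -/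
/-! Against the identity-like gain every sum over `x` collapses to its diagonal term, so the prior
vulnerability is `finv (a / |X|)` and the posterior one is `finv (a / |X| * ∑ y, max_x C x y)`;
multiplicativity of `finv` splits off the common factor `finv (a / |X|)`, which cancels. -/

theorem sum_mul_eq_of_apply_eq_ite {X : Type*} [Fintype X] [DecidableEq X] {f : ℝ → ℝ} {a : ℝ}
    {g : X → X → ℝ} (hg : ∀ w x, f (g w x) = if w = x then a else 0) (c : X → ℝ) (w : X) :
    ∑ x, c x * f (g w x) = c w * a := by
  simp only [hg, mul_ite, mul_zero, Finset.sum_ite_eq, Finset.mem_univ, if_true]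

theorem div_cancel_of_map_mul {finv : ℝ → ℝ}
    (hmul : ∀ a b : ℝ, 0 ≤ a → 0 ≤ b → finv (a * b) = finv a * finv b)
    {k s : ℝ} (hk : 0 ≤ k) (hs : 0 ≤ s) (hfk : 0 < finv k) :
    finv (k * s) / finv k = finv s := by
  rw [hmul k s hk hs, mul_div_cancel_left₀ _ hfk.ne']

theorem stmt_11_general {X Y : Type*} [Fintype X] [Fintype Y] [Nonempty X] [DecidableEq X]
    (C : X → Y → ℝ) (hC0 : ∀ x y, 0 ≤ C x y)
    (f finv : ℝ → ℝ)
    (hmul : ∀ a b : ℝ, 0 ≤ a → 0 ≤ b → finv (a * b) = finv a * finv b)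
    (a : ℝ) (ha : 0 < a) (g : X → X → ℝ)
    (hg : ∀ w x, f (g w x) = if w = x then a else 0)
    (hpos : 0 < finv (a / (Fintype.card X : ℝ))) :
    finv (∑ y, ⨆ w : X, ∑ x, (1 / (Fintype.card X : ℝ)) * C x y * f (g w x)) /
        (⨆ w : X, finv (∑ x, (1 / (Fintype.card X : ℝ)) * f (g w x))) =
      finv (∑ y, ⨆ x, C x y) := by
  set n : ℝ := (Fintype.card X : ℝ)
  have hk : 0 ≤ a / n := by positivity
  have prior : ⨆ w : X, finv (∑ x, 1 / n * f (g w x)) = finv (a / n) := by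
    have diagonal (w : X) : ∑ x, 1 / n * f (g w x) = a / n :=
      (sum_mul_eq_of_apply_eq_ite hg (fun _ => 1 / n) w).trans (one_div_mul_eq_div n a)
    simp only [diagonal, ciSup_const]
  have posterior (y : Y) : ⨆ w, ∑ x, 1 / n * C x y * f (g w x) = a / n * ⨆ x, C x y := by
    rw [Real.mul_iSup_of_nonneg hk]
    refine iSup_congr fun w => ?_
    rw [sum_mul_eq_of_apply_eq_ite hg]
    ring
  rw [prior, Finset.sum_congr rfl fun y _ => posterior y, ← Finset.mul_sum]
  exact div_cancel_of_map_mul hmul hk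
    (Finset.sum_nonneg fun y _ => Real.iSup_nonneg fun x => hC0 x y) hpos

/-- With `W = X`, uniform prior, and a gain `g` with `f (g w x) = a·1_{w = x}`
(`a > 0`), for strictly increasing continuous `f` with multiplicative inverse `finv`, the
multiplicative generalized leakage equals exactly `finv (∑ y, max_x C x y)`:
`V̂_{f,f,g}[π,C] / V_{f,g}(π) = finv (∑ y, max_x C x y)`. -/
theorem stmt_11 {X Y : Type*} [Fintype X] [Fintype Y] [Nonempty X] [DecidableEq X]
    (C : X → Y → ℝ) (hC0 : ∀ x y, 0 ≤ C x y) (hC1 : ∀ x, ∑ y, C x y = 1)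
    (f finv : ℝ → ℝ) (hf : StrictMono f) (hfc : Continuous f)
    (hli : Function.LeftInverse finv f)
    (hmul : ∀ a b : ℝ, 0 ≤ a → 0 ≤ b → finv (a * b) = finv a * finv b)
    (a : ℝ) (ha : 0 < a) (g : X → X → ℝ)
    (hg : ∀ w x, f (g w x) = if w = x then a else 0)
    (hpos : 0 < finv (a / (Fintype.card X : ℝ))) :
    finv (∑ y, ⨆ w : X, ∑ x, (1 / (Fintype.card X : ℝ)) * C x y * f (g w x)) /
        (⨆ w : X, finv (∑ x, (1 / (Fintype.card X : ℝ)) * f (g w x))) =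
      finv (∑ y, ⨆ x, C x y) :=
  stmt_11_general C hC0 f finv hmul a ha g hg hpos
end

section
/- Fix α ∈ (1,∞), a prior π with full support on a finite set X, and a posterior distribution δ on X. Let ℓ_α(t) = exp(((α-1)/α)·t) with inverse ℓ_α^{-1}(s) = (α/(α-1))·log s, and define the pointwise information gain γ(w,x) = log(w_x/π_x) for probability distributions w on X. Then sup_w ℓ_α^{-1}(Σ_x δ_x · ℓ_α(γ(w,x))) = (1/(α-1)) · log Σ_x δ_x^α / π_x^{α-1} = D_α(δ ‖ π), the Rényi divergence of order α, with the optimum attained at w_x* = (δ_x^α/π_x^{α-1}) / Σ_{x'} (δ_{x'}^α/π_{x'}^{α-1}). -/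
/-!
With `c x = δ x * π x ^ (-(α - 1) / α)` the objective inside the logarithm is
`∑ x, c x * w x ^ ((α - 1) / α)`, and Hölder's inequality with the conjugate exponents `α` and
`α / (α - 1)` bounds it by `(∑ x, c x ^ α) ^ (1 / α) * (∑ x, w x) ^ ((α - 1) / α)`, where
`∑ x, w x = 1` and `c x ^ α = δ x ^ α * π x ^ (1 - α)`. Hölder is an equality when `w` is
proportional to `c ^ α`, which is `w*`.
-/

open Finset

section

open Real

variable {ι : Type*} [Fintype ι] {p q : ℝ} {c w : ι → ℝ}

theorem sum_mul_rpow_inv_le_of_sum_eq_one (hpq : p.HolderConjugate q) (hc : ∀ i, 0 ≤ c i)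
    (hw : ∀ i, 0 ≤ w i) (hw1 : ∑ i, w i = 1) :
    ∑ i, c i * w i ^ q⁻¹ ≤ (∑ i, c i ^ p) ^ p⁻¹ := by
  have hq : ∀ i, (w i ^ q⁻¹) ^ q = w i := fun i => by
    rw [← rpow_mul (hw i), inv_mul_cancel₀ hpq.symm.ne_zero, rpow_one]
  simpa [hq, hw1] using inner_le_Lp_mul_Lq_of_nonneg univ hpq (fun i _ => hc i)
    (fun i _ => rpow_nonneg (hw i) q⁻¹)

theorem sum_mul_normalized_rpow_rpow_inv_eq (hpq : p.HolderConjugate q) (hc : ∀ i, 0 ≤ c i)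
    (hT : 0 < ∑ i, c i ^ p) :
    ∑ i, c i * (c i ^ p / ∑ j, c j ^ p) ^ q⁻¹ = (∑ i, c i ^ p) ^ p⁻¹ := by
  set T := ∑ j, c j ^ p
  have hterm : ∀ i, c i * (c i ^ p / T) ^ q⁻¹ = c i ^ p / T ^ q⁻¹ := fun i => by
    rw [div_rpow (rpow_nonneg (hc i) p) hT.le, ← rpow_mul (hc i), mul_div_assoc',
      ← div_eq_mul_inv, hpq.div_conj_eq_sub_one, mul_comm,
      ← rpow_add_one' (hc i) (by simpa using hpq.ne_zero), sub_add_cancel]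
  rw [sum_congr rfl fun i _ => hterm i, ← sum_div, div_eq_iff (rpow_pos_of_pos hT _).ne',
    ← rpow_add hT, hpq.inv_add_inv_eq_one, rpow_one]

theorem mul_exp_mul_log_div (d β : ℝ) {u v : ℝ} (hu : 0 < u) (hv : 0 < v) :
    d * exp (β * log (u / v)) = d * v ^ (-β) * u ^ β := by
  rw [mul_comm β, ← rpow_def_of_pos (div_pos hu hv), div_rpow hu.le hv.le, rpow_neg hv.le]
  ring

theorem mul_rpow_neg_div_rpow {d v α : ℝ} (hd : 0 ≤ d) (hv : 0 < v) (hα : α ≠ 0) :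
    (d * v ^ (-((α - 1) / α))) ^ α = d ^ α / v ^ (α - 1) := by
  rw [mul_rpow hd (rpow_nonneg hv.le _), ← rpow_mul hv.le, neg_mul, div_mul_cancel₀ _ hα,
    rpow_neg hv.le, div_eq_mul_inv]

end

theorem stmt_13_general {X : Type*} [Fintype X] [Nonempty X]
    (π δ : X → ℝ) (hπ : ∀ x, 0 < π x)
    (hδ : ∀ x, 0 < δ x)
    (α : ℝ) (hα : 1 < α) :
    IsGreatest
      {v : ℝ | ∃ w : X → ℝ, (∀ x, 0 < w x) ∧ ∑ x, w x = 1 ∧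
        v = α / (α - 1) * Real.log
          (∑ x, δ x * Real.exp ((α - 1) / α * Real.log (w x / π x)))}
      (1 / (α - 1) * Real.log (∑ x, δ x ^ α * π x ^ (1 - α))) ∧
    α / (α - 1) * Real.log (∑ x, δ x * Real.exp ((α - 1) / α *
        Real.log ((δ x ^ α / π x ^ (α - 1) / ∑ x', δ x' ^ α / π x' ^ (α - 1)) / π x))) =
      1 / (α - 1) * Real.log (∑ x, δ x ^ α * π x ^ (1 - α)) := by
  have hpq : α.HolderConjugate (α / (α - 1)) :=
    (Real.holderConjugate_iff_eq_conjExponent hα).mpr rfl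
  set c : X → ℝ := fun x => δ x * π x ^ (-((α - 1) / α))
  have hc : ∀ x, 0 < c x := fun x => mul_pos (hδ x) (Real.rpow_pos_of_pos (hπ x) _)
  have hcα : ∀ x, c x ^ α = δ x ^ α / π x ^ (α - 1) := fun x =>
    mul_rpow_neg_div_rpow (hδ x).le (hπ x) hpq.ne_zero
  have hT : ∑ x, c x ^ α = ∑ x, δ x ^ α * π x ^ (1 - α) := by
    simp only [hcα, div_eq_mul_inv, ← Real.rpow_neg (hπ _).le, neg_sub]
  have hTpos : 0 < ∑ x, c x ^ α :=
    sum_pos (fun x _ => Real.rpow_pos_of_pos (hc x) α) univ_nonempty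
  have hobj : ∀ w : X → ℝ, (∀ x, 0 < w x) →
      ∑ x, δ x * Real.exp ((α - 1) / α * Real.log (w x / π x)) =
        ∑ x, c x * w x ^ (α / (α - 1))⁻¹ := fun w hw => by
    simp only [mul_exp_mul_log_div _ _ (hw _) (hπ _), inv_div, c]
  have hval : α / (α - 1) * Real.log ((∑ x, c x ^ α) ^ α⁻¹) =
      1 / (α - 1) * Real.log (∑ x, δ x ^ α * π x ^ (1 - α)) := by
    rw [Real.log_rpow hTpos, hT]
    field_simp
  have hopt : α / (α - 1) * Real.log (∑ x, δ x * Real.exp ((α - 1) / α *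
      Real.log ((δ x ^ α / π x ^ (α - 1) / ∑ x', δ x' ^ α / π x' ^ (α - 1)) / π x))) =
      1 / (α - 1) * Real.log (∑ x, δ x ^ α * π x ^ (1 - α)) := by
    simp only [← hcα]
    rw [hobj _ fun x => div_pos (Real.rpow_pos_of_pos (hc x) α) hTpos,
      sum_mul_normalized_rpow_rpow_inv_eq hpq (fun x => (hc x).le) hTpos, hval]
  refine ⟨⟨⟨_, fun x => ?_, ?_, hopt.symm⟩, ?_⟩, hopt⟩
  · simp only [← hcα]
    exact div_pos (Real.rpow_pos_of_pos (hc x) α) hTpos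
  · simp only [← hcα, ← sum_div, div_self hTpos.ne']
  · rintro v ⟨w, hw, hw1, rfl⟩
    rw [hobj w hw, ← hval]
    gcongr
    · exact sum_pos (fun x _ => mul_pos (hc x) (Real.rpow_pos_of_pos (hw x) _)) univ_nonempty
    · exact sum_mul_rpow_inv_le_of_sum_eq_one hpq (fun x => (hc x).le) (fun x => (hw x).le) hw1

/-- For `α > 1`, full-support `π` and `δ` on finite `X`, with
`ℓ_α(t) = exp(((α-1)/α)·t)`, `ℓ_α⁻¹(s) = (α/(α-1))·log s`, and pointwise information gain
`γ(w,x) = log (w x / π x)`, the supremum over (full-support) distributions `w` of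
`ℓ_α⁻¹(∑ x, δ x * ℓ_α (γ (w, x)))` is the Rényi divergence
`D_α(δ‖π) = (1/(α-1))·log ∑ x, (δ x)^α (π x)^(1-α)`, attained at
`w* x = (δ x ^ α / π x ^ (α-1)) / ∑ x', δ x' ^ α / π x' ^ (α-1)`. -/
theorem stmt_13 {X : Type*} [Fintype X] [Nonempty X]
    (π δ : X → ℝ) (hπ : ∀ x, 0 < π x) (hπ1 : ∑ x, π x = 1)
    (hδ : ∀ x, 0 < δ x) (hδ1 : ∑ x, δ x = 1)
    (α : ℝ) (hα : 1 < α) :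
    IsGreatest
      {v : ℝ | ∃ w : X → ℝ, (∀ x, 0 < w x) ∧ ∑ x, w x = 1 ∧
        v = α / (α - 1) * Real.log
          (∑ x, δ x * Real.exp ((α - 1) / α * Real.log (w x / π x)))}
      (1 / (α - 1) * Real.log (∑ x, δ x ^ α * π x ^ (1 - α))) ∧
    α / (α - 1) * Real.log (∑ x, δ x * Real.exp ((α - 1) / α *
        Real.log ((δ x ^ α / π x ^ (α - 1) / ∑ x', δ x' ^ α / π x' ^ (α - 1)) / π x))) =
      1 / (α - 1) * Real.log (∑ x, δ x ^ α * π x ^ (1 - α)) :=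
  stmt_13_general π δ hπ hδ α hα
end

section
/- Fix α ∈ (1,∞), a full-support prior π on finite X, and a channel C from X to Y. Let ℓ_α(t) = exp(((α-1)/α)·t). Then the Kolmogorov–Nagumo ℓ_α-average over y of the pointwise α-leakages D_α(δ^y ‖ π), weighted by p(y), equals the Sibson mutual information of order α: ℓ_α^{-1}(Σ_y p(y)·ℓ_α(D_α(δ^y‖π))) = (α/(α-1)) · log Σ_y (Σ_x π_x C_{x,y}^α)^{1/α} = I_α^S(X;Y). -/
/-!
Write `p y = ∑ x, π x * C x y` and `T y = ∑ x, π x * C x y ^ α`. Since `δ^y_x = π x * C x y / p y`,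
the sum inside `D_α(δ^y ‖ π)` is `T y / p y ^ α`, and `ℓ_α(D_α(δ^y ‖ π)) = (T y / p y ^ α) ^ (1 / α)`.
The weight `p y` cancels the denominator, so the two sums over `y` agree term by term.
-/

open Finset

theorem Real.rpow_mul_div_mul_rpow_one_sub {a b c : ℝ} (ha : 0 < a) (hb : 0 ≤ b) (hc : 0 ≤ c)
    (α : ℝ) : (a * b / c) ^ α * a ^ (1 - α) = a * b ^ α / c ^ α := by
  rw [div_rpow (mul_nonneg ha.le hb) hc, mul_rpow ha.le hb]
  calc a ^ α * b ^ α / c ^ α * a ^ (1 - α) = a ^ (α + (1 - α)) * b ^ α / c ^ α := by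
        rw [rpow_add ha]; ring
    _ = a * b ^ α / c ^ α := by rw [add_sub_cancel, rpow_one]

theorem Finset.sum_mul_rpow_pos {ι : Type*} (s : Finset ι) {w f : ι → ℝ}
    (hw : ∀ i ∈ s, 0 ≤ w i) (hf : ∀ i ∈ s, 0 ≤ f i) (h : 0 < ∑ i ∈ s, w i * f i) (α : ℝ) :
    0 < ∑ i ∈ s, w i * f i ^ α := by
  obtain ⟨i, hi, hpos⟩ := exists_lt_of_sum_lt (f := fun _ => (0 : ℝ)) (by simpa using h)
  have hwi : 0 < w i := (hw i hi).lt_of_ne' (left_ne_zero_of_mul hpos.ne')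
  have hfi : 0 < f i := (hf i hi).lt_of_ne' (right_ne_zero_of_mul hpos.ne')
  exact sum_pos' (fun j hj => mul_nonneg (hw j hj) (Real.rpow_nonneg (hf j hj) α))
    ⟨i, hi, mul_pos hwi (Real.rpow_pos_of_pos hfi α)⟩

theorem Real.exp_mul_one_div_sub_one_mul_log {S : ℝ} (hS : 0 < S) {α : ℝ} (hα : α ≠ 1) :
    exp ((α - 1) / α * (1 / (α - 1) * log S)) = S ^ (1 / α) := by
  rw [rpow_def_of_pos hS]
  congr 1
  field_simp [sub_ne_zero.mpr hα]

theorem Real.mul_div_rpow_rpow_one_div {p T : ℝ} (hp : 0 < p) (hT : 0 ≤ T) {α : ℝ} (hα : α ≠ 0) :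
    p * (T / p ^ α) ^ (1 / α) = T ^ (1 / α) := by
  rw [div_rpow hT (rpow_nonneg hp.le α), ← rpow_mul hp.le, mul_one_div_cancel hα, rpow_one,
    mul_div_cancel₀ _ hp.ne']

theorem stmt_14_general {X Y : Type*} [Fintype X] [Fintype Y]
    (π : X → ℝ) (hπ : ∀ x, 0 < π x)
    (C : X → Y → ℝ) (hC0 : ∀ x y, 0 ≤ C x y)
    (hp : ∀ y, 0 < ∑ x, π x * C x y)
    (α : ℝ) (hα : 1 < α) :
    α / (α - 1) * Real.log (∑ y, (∑ x, π x * C x y) *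
        Real.exp ((α - 1) / α * (1 / (α - 1) * Real.log
          (∑ x, (π x * C x y / ∑ x', π x' * C x' y) ^ α * π x ^ (1 - α))))) =
      α / (α - 1) * Real.log (∑ y, (∑ x, π x * C x y ^ α) ^ (1 / α)) := by
  congr 2
  refine sum_congr rfl fun y _ => ?_
  have hT := sum_mul_rpow_pos univ (fun x _ => (hπ x).le) (fun x _ => hC0 x y) (hp y) α
  have hD : ∑ x, (π x * C x y / ∑ x', π x' * C x' y) ^ α * π x ^ (1 - α) =
      (∑ x, π x * C x y ^ α) / (∑ x, π x * C x y) ^ α := by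
    rw [sum_div]
    exact sum_congr rfl fun x _ => Real.rpow_mul_div_mul_rpow_one_sub (hπ x) (hC0 x y) (hp y).le α
  rw [hD, Real.exp_mul_one_div_sub_one_mul_log (div_pos hT (Real.rpow_pos_of_pos (hp y) α)) hα.ne',
    Real.mul_div_rpow_rpow_one_div (hp y) hT.le (by linarith)]

/-- For `α > 1`, full-support prior `π` and channel `C` with `p y > 0` for all `y`,
the Kolmogorov–Nagumo `ℓ_α`-average of the pointwise α-leakages `D_α(δ^y ‖ π)`, weighted by
`p y`, equals the Sibson mutual information of order `α`:
`ℓ_α⁻¹(∑ y, p y · ℓ_α(D_α(δ^y‖π))) = (α/(α-1)) · log ∑ y, (∑ x, π x * (C x y)^α)^(1/α)`. -/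
theorem stmt_14 {X Y : Type*} [Fintype X] [Fintype Y] [Nonempty X]
    (π : X → ℝ) (hπ : ∀ x, 0 < π x) (hπ1 : ∑ x, π x = 1)
    (C : X → Y → ℝ) (hC0 : ∀ x y, 0 ≤ C x y) (hC1 : ∀ x, ∑ y, C x y = 1)
    (hp : ∀ y, 0 < ∑ x, π x * C x y)
    (α : ℝ) (hα : 1 < α) :
    α / (α - 1) * Real.log (∑ y, (∑ x, π x * C x y) *
        Real.exp ((α - 1) / α * (1 / (α - 1) * Real.log
          (∑ x, (π x * C x y / ∑ x', π x' * C x' y) ^ α * π x ^ (1 - α))))) =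
      α / (α - 1) * Real.log (∑ y, (∑ x, π x * C x y ^ α) ^ (1 / α)) :=
  stmt_14_general π hπ C hC0 hp α hα
end

section
/- For α > 1, the multiplicative generalized leakage with f = h = f_α (where f_α(t) = t^{(α-1)/α}) and gain g(w,x) = w_x equals the Arimoto mutual information of order α: log(V̂_{f_α,f_α,g}[π,C] / V_{f_α,g}(π)) = H_α(π) − H_α(X|Y) = I_α^A(X;Y), where H_α(X|Y) = (α/(1-α))·log Σ_y p(y)·(Σ_x (δ^y_x)^α)^{1/α} is Arimoto conditional entropy. -/
/-!
Since `(s ^ (1/(α-1))) ^ ((α-1)/α) = s ^ (1/α)`, the posterior vulnerabilities enter `V̂` only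
through the Arimoto sum `A = ∑ y, p y * ‖δ^y‖_α`, so `V̂ = A ^ (α/(α-1))` and `V = S ^ (1/(α-1))`
with `S = ∑ x, π x ^ α`. Taking logarithms is then pure algebra once `A` and `S` are known to be
positive, which holds because `π` and every posterior `δ^y` with `p y > 0` are probability vectors.
-/

open Finset

lemma rpow_one_div_sub_one_rpow_sub_one_div {s : ℝ} (hs : 0 ≤ s) {α : ℝ} (hα : α ≠ 1) :
    (s ^ (1 / (α - 1))) ^ ((α - 1) / α) = s ^ (1 / α) := by
  rw [← Real.rpow_mul hs]
  congr 1
  have : α - 1 ≠ 0 := sub_ne_zero.mpr hα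
  field_simp

lemma sum_rpow_pos_of_sum_ne_zero {ι : Type*} {s : Finset ι} {w : ι → ℝ}
    (hw : ∀ i ∈ s, 0 ≤ w i) (hs : ∑ i ∈ s, w i ≠ 0) (α : ℝ) : 0 < ∑ i ∈ s, w i ^ α := by
  obtain ⟨i, hi, hwi⟩ := exists_ne_zero_of_sum_ne_zero hs
  exact sum_pos' (fun j hj => Real.rpow_nonneg (hw j hj) α)
    ⟨i, hi, Real.rpow_pos_of_pos ((hw i hi).lt_of_ne' hwi) α⟩

section Channel

variable {X Y : Type*} [Fintype X] {π : X → ℝ} {C : X → Y → ℝ}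

lemma posterior_nonneg (hπ : ∀ x, 0 ≤ π x) (hC0 : ∀ x y, 0 ≤ C x y) (y : Y) (x : X) :
    0 ≤ π x * C x y / ∑ x', π x' * C x' y :=
  div_nonneg (mul_nonneg (hπ x) (hC0 x y)) (sum_nonneg fun x' _ => mul_nonneg (hπ x') (hC0 x' y))

variable [Fintype Y]

lemma sum_outputProb_eq_one (hπ1 : ∑ x, π x = 1) (hC1 : ∀ x, ∑ y, C x y = 1) :
    ∑ y, ∑ x, π x * C x y = 1 := by
  rw [sum_comm]
  simp only [← mul_sum, hC1, mul_one, hπ1]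

lemma arimoto_sum_pos (hπ : ∀ x, 0 ≤ π x) (hπ1 : ∑ x, π x = 1)
    (hC0 : ∀ x y, 0 ≤ C x y) (hC1 : ∀ x, ∑ y, C x y = 1) (α : ℝ) :
    0 < ∑ y, (∑ x, π x * C x y) * (∑ x, (π x * C x y / ∑ x', π x' * C x' y) ^ α) ^ (1 / α) := by
  have hp : ∀ y, 0 ≤ ∑ x, π x * C x y := fun y =>
    sum_nonneg fun x _ => mul_nonneg (hπ x) (hC0 x y)
  obtain ⟨y, -, hy⟩ := exists_ne_zero_of_sum_ne_zero
    ((sum_outputProb_eq_one hπ1 hC1).trans_ne one_ne_zero)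
  have hposterior : ∑ x, π x * C x y / ∑ x', π x' * C x' y ≠ 0 := by
    rw [← sum_div, div_self hy]
    exact one_ne_zero
  have hvuln : 0 < ∑ x, (π x * C x y / ∑ x', π x' * C x' y) ^ α :=
    sum_rpow_pos_of_sum_ne_zero (fun x _ => posterior_nonneg hπ hC0 y x) hposterior α
  refine sum_pos' (fun y' _ => mul_nonneg (hp y') (Real.rpow_nonneg ?_ _)) ⟨y, mem_univ y, ?_⟩
  · exact sum_nonneg fun x _ => Real.rpow_nonneg (posterior_nonneg hπ hC0 y' x) α
  · exact mul_pos ((hp y).lt_of_ne' hy) (Real.rpow_pos_of_pos hvuln _)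

end Channel

theorem stmt_15_general {X Y : Type*} [Fintype X] [Fintype Y]
    (π : X → ℝ) (hπ : ∀ x, 0 < π x) (hπ1 : ∑ x, π x = 1)
    (C : X → Y → ℝ) (hC0 : ∀ x y, 0 ≤ C x y) (hC1 : ∀ x, ∑ y, C x y = 1)
    (α : ℝ) (hα : 1 < α) :
    Real.log
      ((∑ y, (∑ x, π x * C x y) *
          ((∑ x, (π x * C x y / ∑ x', π x' * C x' y) ^ α) ^ (1 / (α - 1)))
            ^ ((α - 1) / α)) ^ (α / (α - 1)) /
        (∑ x, π x ^ α) ^ (1 / (α - 1))) =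
      1 / (1 - α) * Real.log (∑ x, π x ^ α) -
        α / (1 - α) * Real.log (∑ y, (∑ x, π x * C x y) *
          (∑ x, (π x * C x y / ∑ x', π x' * C x' y) ^ α) ^ (1 / α)) := by
  have hπ0 : ∀ x, 0 ≤ π x := fun x => (hπ x).le
  have hvuln : ∀ y, 0 ≤ ∑ x, (π x * C x y / ∑ x', π x' * C x' y) ^ α := fun y =>
    sum_nonneg fun x _ => Real.rpow_nonneg (posterior_nonneg hπ0 hC0 y x) α
  simp only [rpow_one_div_sub_one_rpow_sub_one_div (hvuln _) hα.ne']
  have hS := sum_rpow_pos_of_sum_ne_zero (fun x _ => hπ0 x) (hπ1.trans_ne one_ne_zero) α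
  have hA := arimoto_sum_pos hπ0 hπ1 hC0 hC1 α
  rw [Real.log_div (Real.rpow_pos_of_pos hA _).ne' (Real.rpow_pos_of_pos hS _).ne',
    Real.log_rpow hA, Real.log_rpow hS]
  have : α - 1 ≠ 0 := sub_ne_zero.mpr hα.ne'
  have : 1 - α ≠ 0 := sub_ne_zero.mpr hα.ne
  field_simp
  ring

/-- For `α > 1`, with `f_α(t) = t^((α-1)/α)`, gain `g(w,x) = w x`, closed-form
vulnerabilities `V_{f_α,g}(π) = (∑ x, π x ^ α)^(1/(α-1))` and
`V̂_{f_α,f_α,g}[π,C] = f_α⁻¹(∑ y, p y · f_α(V_{f_α,g}(δ^y)))`, the multiplicative leakage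
equals the Arimoto mutual information:
`log (V̂ / V) = H_α(π) − H_α(X|Y)` with `H_α(π) = (1/(1-α)) log ∑ π^α` and
`H_α(X|Y) = (α/(1-α)) log ∑ y, p y (∑ x (δ^y x)^α)^(1/α)`. -/
theorem stmt_15 {X Y : Type*} [Fintype X] [Fintype Y] [Nonempty X]
    (π : X → ℝ) (hπ : ∀ x, 0 < π x) (hπ1 : ∑ x, π x = 1)
    (C : X → Y → ℝ) (hC0 : ∀ x y, 0 ≤ C x y) (hC1 : ∀ x, ∑ y, C x y = 1)
    (α : ℝ) (hα : 1 < α) :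
    Real.log
      ((∑ y, (∑ x, π x * C x y) *
          ((∑ x, (π x * C x y / ∑ x', π x' * C x' y) ^ α) ^ (1 / (α - 1)))
            ^ ((α - 1) / α)) ^ (α / (α - 1)) /
        (∑ x, π x ^ α) ^ (1 / (α - 1))) =
      1 / (1 - α) * Real.log (∑ x, π x ^ α) -
        α / (1 - α) * Real.log (∑ y, (∑ x, π x * C x y) *
          (∑ x, (π x * C x y / ∑ x', π x' * C x' y) ^ α) ^ (1 / α)) :=
  stmt_15_general π hπ hπ1 C hC0 hC1 α hα
end

section
/- Fix α > 1 and β ≥ 1 with β ≥ α/(α-1). With f_α(t) = t^{(α-1)/α}, h_{(α,β)}(t) = t^{(α-1)β/α}, g(w,x) = w_x, and prior and posterior vulnerabilities V_{f_α,g}(π) = (Σ_x π_x^α)^{1/(α-1)} and V̂ = h_{(α,β)}^{-1}(Σ_y p(y)·h_{(α,β)}(V_{f_α,g}(δ^y))), the multiplicative leakage equals log(V̂ / V_{f_α,g}(π)) = (α/((α-1)β)) · log Σ_y p(y)^{1-β} · (Σ_x π_x^α C_{x,y}^α / Σ_x π_x^α)^{β/α}. -/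
/-!
Write `p y = ∑ x, π x * C x y`, `A y = ∑ x, π x ^ α * C x y ^ α` and `S = ∑ x, π x ^ α`.
The Rényi sum of the posterior `δ^y` is `A y / p y ^ α`, so the `y`-th summand of the averaged
posterior vulnerability collapses to `p y ^ (1 - β) * A y ^ (β / α)`. Pulling `S ^ (β / α)` out of
the sum over `y`, the outer power `α / ((α - 1) β)` turns it into `S ^ (1 / (α - 1))`, which is the
prior vulnerability and cancels in the quotient.
-/

open Finset

lemma Real.log_rpow_of_nonneg {x : ℝ} (hx : 0 ≤ x) (y : ℝ) :
    Real.log (x ^ y) = y * Real.log x := by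
  rcases hx.eq_or_lt with rfl | hx
  · rcases eq_or_ne y 0 with rfl | hy <;> simp [*]
  · exact Real.log_rpow hx y

lemma Finset.sum_div_rpow {ι : Type*} (s : Finset ι) {w : ι → ℝ} (hw : ∀ i ∈ s, 0 ≤ w i)
    {p : ℝ} (hp : 0 ≤ p) (α : ℝ) :
    ∑ i ∈ s, (w i / p) ^ α = (∑ i ∈ s, w i ^ α) / p ^ α := by
  rw [sum_div]
  exact sum_congr rfl fun i hi => Real.div_rpow (hw i hi) hp α

lemma mul_rpow_rpow_div_rpow_eq {p A α : ℝ} (β : ℝ) (hp : 0 < p) (hA : 0 ≤ A)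
    (hα0 : α ≠ 0) (hα1 : α - 1 ≠ 0) :
    p * ((A / p ^ α) ^ (1 / (α - 1))) ^ ((α - 1) * β / α) = p ^ (1 - β) * A ^ (β / α) := by
  have hexp : 1 / (α - 1) * ((α - 1) * β / α) = β / α := by field_simp
  have hpow : α * (β / α) = β := by field_simp
  have hpα : 0 ≤ p ^ α := Real.rpow_nonneg hp.le α
  rw [← Real.rpow_mul (div_nonneg hA hpα), hexp, Real.div_rpow hA hpα, ← Real.rpow_mul hp.le, hpow,
    Real.rpow_sub hp, Real.rpow_one]
  field_simp

lemma Finset.sum_mul_rpow_eq_rpow_mul_sum {ι : Type*} (s : Finset ι) (a : ι → ℝ) {b : ι → ℝ}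
    (hb : ∀ i ∈ s, 0 ≤ b i) {S : ℝ} (hS : 0 < S) (γ : ℝ) :
    ∑ i ∈ s, a i * b i ^ γ = S ^ γ * ∑ i ∈ s, a i * (b i / S) ^ γ := by
  rw [mul_sum]
  refine sum_congr rfl fun i hi => ?_
  rw [Real.div_rpow (hb i hi) hS.le]
  field_simp

lemma log_rpow_mul_div_rpow {S R c d e : ℝ} (hS : 0 < S) (hR : 0 ≤ R) (hcd : d * c = e) :
    Real.log ((S ^ d * R) ^ c / S ^ e) = c * Real.log R := by
  rw [Real.mul_rpow (Real.rpow_nonneg hS.le d) hR, ← Real.rpow_mul hS.le, hcd,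
    mul_div_cancel_left₀ _ (Real.rpow_pos_of_pos hS e).ne', Real.log_rpow_of_nonneg hR]

theorem stmt_17_general {X Y : Type*} [Fintype X] [Fintype Y] [Nonempty X]
    (π : X → ℝ) (hπ : ∀ x, 0 < π x)
    (C : X → Y → ℝ) (hC0 : ∀ x y, 0 < C x y)
    (α β : ℝ) (hα : 1 < α) (hβ : 1 ≤ β) :
    Real.log
      ((∑ y, (∑ x, π x * C x y) *
          ((∑ x, (π x * C x y / ∑ x', π x' * C x' y) ^ α) ^ (1 / (α - 1)))
            ^ ((α - 1) * β / α)) ^ (α / ((α - 1) * β)) /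
        (∑ x, π x ^ α) ^ (1 / (α - 1))) =
      α / ((α - 1) * β) * Real.log (∑ y, (∑ x, π x * C x y) ^ (1 - β) *
        ((∑ x, π x ^ α * C x y ^ α) / ∑ x, π x ^ α) ^ (β / α)) := by
  have hα0 : α ≠ 0 := by positivity
  have hα1 : α - 1 ≠ 0 := by linarith
  have hβ0 : β ≠ 0 := by positivity
  have hS : 0 < ∑ x, π x ^ α := sum_pos (fun x _ => Real.rpow_pos_of_pos (hπ x) α) univ_nonempty
  have hp (y : Y) : 0 < ∑ x, π x * C x y :=
    sum_pos (fun x _ => mul_pos (hπ x) (hC0 x y)) univ_nonempty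
  have hA (y : Y) : 0 ≤ ∑ x, π x ^ α * C x y ^ α := sum_nonneg fun x _ => by
    have := hπ x; have := hC0 x y; positivity
  have hposterior (y : Y) : ∑ x, (π x * C x y / ∑ x', π x' * C x' y) ^ α =
      (∑ x, π x ^ α * C x y ^ α) / (∑ x, π x * C x y) ^ α := by
    simp_rw [sum_div_rpow _ (fun x _ => (mul_pos (hπ x) (hC0 x y)).le) (hp y).le,
      Real.mul_rpow (hπ _).le (hC0 _ y).le]
  simp_rw [hposterior, mul_rpow_rpow_div_rpow_eq β (hp _) (hA _) hα0 hα1]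
  rw [sum_mul_rpow_eq_rpow_mul_sum _ _ (fun y _ => hA y) hS,
    log_rpow_mul_div_rpow hS (sum_nonneg fun y _ => mul_nonneg (Real.rpow_nonneg (hp y).le _)
      (Real.rpow_nonneg (div_nonneg (hA y) hS.le) _)) (by field_simp)]

/-- For `α > 1`, `β ≥ 1` with `β ≥ α/(α-1)`, with `f_α(t)=t^((α-1)/α)`,
`h_{(α,β)}(t)=t^((α-1)β/α)`, gain `g(w,x)=w x`, prior vulnerability
`V_{f_α,g}(π) = (∑ x, π x ^ α)^(1/(α-1))` and
`V̂ = h_{(α,β)}⁻¹(∑ y, p y · h_{(α,β)}(V_{f_α,g}(δ^y)))`, the multiplicative leakage is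
`log (V̂/V) = (α/((α-1)β)) · log ∑ y, (p y)^(1-β) · (∑ x π^α C^α / ∑ x π^α)^(β/α)`. -/
theorem stmt_17 {X Y : Type*} [Fintype X] [Fintype Y] [Nonempty X]
    (π : X → ℝ) (hπ : ∀ x, 0 < π x) (hπ1 : ∑ x, π x = 1)
    (C : X → Y → ℝ) (hC0 : ∀ x y, 0 < C x y) (hC1 : ∀ x, ∑ y, C x y = 1)
    (α β : ℝ) (hα : 1 < α) (hβ : 1 ≤ β) (hβ2 : α / (α - 1) ≤ β) :
    Real.log
      ((∑ y, (∑ x, π x * C x y) *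
          ((∑ x, (π x * C x y / ∑ x', π x' * C x' y) ^ α) ^ (1 / (α - 1)))
            ^ ((α - 1) * β / α)) ^ (α / ((α - 1) * β)) /
        (∑ x, π x ^ α) ^ (1 / (α - 1))) =
      α / ((α - 1) * β) * Real.log (∑ y, (∑ x, π x * C x y) ^ (1 - β) *
        ((∑ x, π x ^ α * C x y ^ α) / ∑ x, π x ^ α) ^ (β / α)) :=
  stmt_17_general π hπ C hC0 α β hα hβ
end
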